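/- arXiv:1601.06238 — 11 statements merged into one kernel-verified Lean document; each statement's English description precedes it below -/
import Mathlib

section
/- Let A be an assosymmetric algebra. Then for all a, b, c in A, the Jordan associator satisfies ⟨a,b,c⟩ = [[a,c],b], where [x,y] = xy - yx is the commutator. -/
variable {K A : Type*} [Field K] [NonUnitalNonAssocRing A] [Module K A]
  [IsScalarTower K A A] [SMulCommClass K A A]

/-- associator -/
def assoc (a b c : A) : A := a * (b * c) - a * b * c
/-- commutator -/
def brk (a b : A) : A := a * b - b * a
/-- Jordan product -/
def jmul (a b : A) : A := a * b + b * a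
/-- Jordan associator -/
def jassoc (a b c : A) : A := jmul a (jmul b c) - jmul (jmul a b) c

theorem stmt1 (h2 : (2 : K) ≠ 0) (h3 : (3 : K) ≠ 0)
    (hl : ∀ a b c : A, assoc a b c = assoc b a c)
    (hr : ∀ a b c : A, assoc a b c = assoc a c b)
    (a b c : A) :
    jassoc a b c = brk (brk a c) b := by
  have e : ∀ x y z : A, x * (y * z) = x * y * z + assoc x y z := by
    intro x y z; simp [assoc]
  have p1 : assoc a c b = assoc a b c := (hr a b c).symm
  have p2 : assoc b c a = assoc a b c := by rw [hl b c a, hr c b a, hl c a b, hr a c b]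
  have p3 : assoc c b a = assoc a b c := by rw [hr c b a, hl c a b, hr a c b]
  have p4 : assoc b a c = assoc a b c := (hl a b c).symm
  have p5 : assoc c a b = assoc a b c := by rw [hl c a b, hr a c b]
  simp only [jassoc, jmul, brk, mul_add, add_mul, sub_mul, mul_sub, e, p1, p2, p3, p4, p5]
  abel
end

section
/- Let A be an assosymmetric algebra over a field of characteristic ≠ 2, 3. Then for all a, b, c, d in A: ([a,b],c,d) = 0, (a,[b,c],d) = 0, and (a,b,[c,d]) = 0, i.e., commutators lie in the nucleus of A. -/
variable {K A : Type*} [Field K] [NonUnitalNonAssocRing A] [Module K A]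
  [IsScalarTower K A A] [SMulCommClass K A A]

private lemma cancel2 (h2 : (2 : K) ≠ 0) {x : A} (h : (2 : ℤ) • x = 0) : x = 0 := by
  have h' : (2 : K) • x = 0 := by
    rw [show ((2 : K)) = ((2 : ℤ) : K) by norm_num, Int.cast_smul_eq_zsmul]
    exact h
  calc x = (2 : K)⁻¹ • ((2 : K) • x) := (inv_smul_smul₀ h2 x).symm
    _ = 0 := by rw [h', smul_zero]

private lemma key (h2 : (2 : K) ≠ 0)
    (hl : ∀ a b c : A, assoc a b c = assoc b a c)
    (hr : ∀ a b c : A, assoc a b c = assoc a c b)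
    (a b c d : A) : assoc (brk a b) c d = 0 := by
  have hL : ∀ x y z : A, assoc x y z - assoc y x z = 0 :=
    fun x y z => sub_eq_zero_of_eq (hl x y z)
  have hR : ∀ x y z : A, assoc x y z - assoc x z y = 0 :=
    fun x y z => sub_eq_zero_of_eq (hr x y z)
  have H : (2 : ℤ) • assoc (brk a b) c d =
      ((-1 : ℤ)) • (assoc (b * a) c d - assoc c (b * a) d) +
      ((-1 : ℤ)) • (assoc (a * b) d c - assoc (a * b) c d) +
      ((1 : ℤ)) • (assoc (b * a) d c - assoc d (b * a) c) +
      ((2 : ℤ)) • (assoc (a * c) b d - assoc b (a * c) d) +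
      ((2 : ℤ)) • (assoc (a * c) d b - assoc (a * c) b d) +
      ((-1 : ℤ)) • (assoc (c * a) d b - assoc d (c * a) b) +
      ((1 : ℤ)) • (assoc (a * d) b c - assoc b (a * d) c) +
      ((-1 : ℤ)) • (assoc (a * d) c b - assoc c (a * d) b) +
      ((-2 : ℤ)) • (assoc (b * c) a d - assoc a (b * c) d) +
      ((-2 : ℤ)) • (assoc (b * c) d a - assoc (b * c) a d) +
      ((1 : ℤ)) • (assoc (c * b) d a - assoc d (c * b) a) +
      ((-1 : ℤ)) • (assoc (b * d) a c - assoc a (b * d) c) +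
      ((1 : ℤ)) • (assoc (b * d) c a - assoc c (b * d) a) +
      ((3 : ℤ)) • (assoc (c * d) a b - assoc a (c * d) b) +
      ((-3 : ℤ)) • (assoc (c * d) b a - assoc b (c * d) a) +
      ((3 : ℤ)) • (assoc (c * d) b a - assoc (c * d) a b) +
      ((-1 : ℤ)) • (assoc a (b * c) d - assoc a d (b * c)) +
      ((-1 : ℤ)) • (assoc a (d * b) c - assoc a c (d * b)) +
      ((1 : ℤ)) • (assoc a (c * d) b - assoc a b (c * d)) +
      ((1 : ℤ)) • (assoc a (d * c) b - assoc a b (d * c)) +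
      ((1 : ℤ)) • (assoc b (a * c) d - assoc b d (a * c)) +
      ((1 : ℤ)) • (assoc b (d * a) c - assoc b c (d * a)) +
      ((-1 : ℤ)) • (assoc b (c * d) a - assoc b a (c * d)) +
      ((-1 : ℤ)) • (assoc b (d * c) a - assoc b a (d * c)) +
      ((-1 : ℤ)) • (assoc c (b * a) d - assoc c d (b * a)) +
      ((1 : ℤ)) • (assoc d (b * a) c - assoc d c (b * a)) +
      ((-1 : ℤ)) • (assoc d (c * a) b - assoc d b (c * a)) +
      ((1 : ℤ)) • (assoc d (c * b) a - assoc d a (c * b)) +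
      ((1 : ℤ)) • (assoc a c (d * b) - assoc c a (d * b)) +
      ((-1 : ℤ)) • (assoc a d (c * b) - assoc d a (c * b)) +
      ((-1 : ℤ)) • (assoc b c (d * a) - assoc c b (d * a)) +
      ((1 : ℤ)) • (assoc b d (c * a) - assoc d b (c * a)) +
      ((-1 : ℤ)) • (assoc c d (b * a) - assoc d c (b * a)) +
      ((1 : ℤ)) • (a * (assoc b c d - assoc c b d)) +
      ((1 : ℤ)) • ((assoc b c d - assoc c b d) * a) +
      ((1 : ℤ)) • ((assoc b c d - assoc b d c) * a) +
      ((1 : ℤ)) • (a * (assoc b d c - assoc d b c)) +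
      ((1 : ℤ)) • (a * (assoc c b d - assoc c d b)) +
      ((-1 : ℤ)) • (a * (assoc c d b - assoc d c b)) +
      ((-1 : ℤ)) • (b * (assoc a c d - assoc c a d)) +
      ((-1 : ℤ)) • ((assoc a c d - assoc c a d) * b) +
      ((-1 : ℤ)) • ((assoc a c d - assoc a d c) * b) +
      ((-1 : ℤ)) • (b * (assoc a d c - assoc d a c)) +
      ((-1 : ℤ)) • (b * (assoc c a d - assoc c d a)) +
      ((1 : ℤ)) • (b * (assoc c d a - assoc d c a)) +
      ((1 : ℤ)) • (c * (assoc a b d - assoc b a d)) +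
      ((-1 : ℤ)) • (c * (assoc a b d - assoc a d b)) +
      ((1 : ℤ)) • ((assoc a b d - assoc a d b) * c) +
      ((1 : ℤ)) • (c * (assoc b a d - assoc b d a)) +
      ((-1 : ℤ)) • ((assoc b a d - assoc b d a) * c) +
      ((1 : ℤ)) • ((assoc a b c - assoc b a c) * d) := by
    simp only [assoc, brk, mul_sub, sub_mul, mul_add, add_mul, smul_sub, smul_add]
    abel
  have H2 : (2 : ℤ) • assoc (brk a b) c d = 0 := by
    rw [H]
    simp only [hL, hR, smul_zero, mul_zero, zero_mul, add_zero, zero_add]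
  exact cancel2 h2 H2

theorem stmt3 (h2 : (2 : K) ≠ 0) (h3 : (3 : K) ≠ 0)
    (hl : ∀ a b c : A, assoc a b c = assoc b a c)
    (hr : ∀ a b c : A, assoc a b c = assoc a c b)
    (a b c d : A) :
    assoc (brk a b) c d = 0 ∧ assoc a (brk b c) d = 0 ∧ assoc a b (brk c d) = 0 := by
  refine ⟨key h2 hl hr a b c d, ?_, ?_⟩
  · rw [hl]; exact key h2 hl hr b c a d
  · rw [hr, hl]; exact key h2 hl hr c d a b
end

section
/- Let A be an assosymmetric algebra over a field of characteristic ≠ 2, 3. Then for all a, b, c, d, e in A: [a,b]·(c,d,e) = 0 and (a,b,c)·[d,e] = 0, i.e., products of commutators with associators vanish. -/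
variable {K A : Type*} [Field K] [NonUnitalNonAssocRing A] [Module K A]
  [IsScalarTower K A A] [SMulCommClass K A A]

section Aux

variable {A : Type*} [NonUnitalNonAssocRing A]

private theorem nucl {A : Type*} [NonUnitalNonAssocRing A]
    (hl : ∀ a b c : A, assoc a b c = assoc b a c)
    (hr : ∀ a b c : A, assoc a b c = assoc a c b)
    (a b c d : A) :
    assoc (brk a b) c d + assoc (brk a b) c d = 0 := by
  have h1 : (assoc a b c - assoc b a c) = (0 : A) := by rw [hl a b c, sub_self]
  have h2 : (assoc a b c - assoc a c b) = (0 : A) := by rw [hr a b c, sub_self]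
  have h3 : (assoc a b d - assoc b a d) = (0 : A) := by rw [hl a b d, sub_self]
  have h4 : (assoc a b d - assoc a d b) = (0 : A) := by rw [hr a b d, sub_self]
  have h5 : (assoc a c b - assoc c a b) = (0 : A) := by rw [hl a c b, sub_self]
  have h6 : (assoc a c d - assoc c a d) = (0 : A) := by rw [hl a c d, sub_self]
  have h7 : (assoc a c d - assoc a d c) = (0 : A) := by rw [hr a c d, sub_self]
  have h8 : (assoc a d b - assoc d a b) = (0 : A) := by rw [hl a d b, sub_self]
  have h9 : (assoc a d c - assoc d a c) = (0 : A) := by rw [hl a d c, sub_self]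
  have h10 : (assoc b a c - assoc b c a) = (0 : A) := by rw [hr b a c, sub_self]
  have h11 : (assoc b a d - assoc b d a) = (0 : A) := by rw [hr b a d, sub_self]
  have h12 : (assoc b c a - assoc c b a) = (0 : A) := by rw [hl b c a, sub_self]
  have h13 : (assoc b c d - assoc c b d) = (0 : A) := by rw [hl b c d, sub_self]
  have h14 : (assoc b c d - assoc b d c) = (0 : A) := by rw [hr b c d, sub_self]
  have h15 : (assoc b d a - assoc d b a) = (0 : A) := by rw [hl b d a, sub_self]
  have h16 : (assoc b d c - assoc d b c) = (0 : A) := by rw [hl b d c, sub_self]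
  have h17 : (assoc c a d - assoc c d a) = (0 : A) := by rw [hr c a d, sub_self]
  have h18 : (assoc c b d - assoc c d b) = (0 : A) := by rw [hr c b d, sub_self]
  have h19 : (assoc c d a - assoc d c a) = (0 : A) := by rw [hl c d a, sub_self]
  have h20 : (assoc c d b - assoc d c b) = (0 : A) := by rw [hl c d b, sub_self]
  have h21 : (assoc a b (c * d) - assoc b a (c * d)) = (0 : A) := by rw [hl a b (c * d), sub_self]
  have h22 : (assoc a b (c * d) - assoc a (c * d) b) = (0 : A) := by rw [hr a b (c * d), sub_self]
  have h23 : (assoc a d (b * c) - assoc d a (b * c)) = (0 : A) := by rw [hl a d (b * c), sub_self]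
  have h24 : (assoc a d (b * c) - assoc a (b * c) d) = (0 : A) := by rw [hr a d (b * c), sub_self]
  have h25 : (assoc a d (c * b) - assoc d a (c * b)) = (0 : A) := by rw [hl a d (c * b), sub_self]
  have h26 : (assoc a d (c * b) - assoc a (c * b) d) = (0 : A) := by rw [hr a d (c * b), sub_self]
  have h27 : (assoc b c (a * d) - assoc c b (a * d)) = (0 : A) := by rw [hl b c (a * d), sub_self]
  have h28 : (assoc b c (a * d) - assoc b (a * d) c) = (0 : A) := by rw [hr b c (a * d), sub_self]
  have h29 : (assoc b c (d * a) - assoc c b (d * a)) = (0 : A) := by rw [hl b c (d * a), sub_self]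
  have h30 : (assoc b c (d * a) - assoc b (d * a) c) = (0 : A) := by rw [hr b c (d * a), sub_self]
  have h31 : (assoc b d (a * c) - assoc d b (a * c)) = (0 : A) := by rw [hl b d (a * c), sub_self]
  have h32 : (assoc b d (a * c) - assoc b (a * c) d) = (0 : A) := by rw [hr b d (a * c), sub_self]
  have h33 : (assoc b d (c * a) - assoc d b (c * a)) = (0 : A) := by rw [hl b d (c * a), sub_self]
  have h34 : (assoc b d (c * a) - assoc b (c * a) d) = (0 : A) := by rw [hr b d (c * a), sub_self]
  have h35 : (assoc c b (a * d) - assoc c (a * d) b) = (0 : A) := by rw [hr c b (a * d), sub_self]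
  have h36 : (assoc c b (d * a) - assoc c (d * a) b) = (0 : A) := by rw [hr c b (d * a), sub_self]
  have h37 : (assoc c d (a * b) - assoc c (a * b) d) = (0 : A) := by rw [hr c d (a * b), sub_self]
  have h38 : (assoc c d (b * a) - assoc d c (b * a)) = (0 : A) := by rw [hl c d (b * a), sub_self]
  have h39 : (assoc c d (b * a) - assoc c (b * a) d) = (0 : A) := by rw [hr c d (b * a), sub_self]
  have h40 : (assoc d b (a * c) - assoc d (a * c) b) = (0 : A) := by rw [hr d b (a * c), sub_self]
  have h41 : (assoc d b (c * a) - assoc d (c * a) b) = (0 : A) := by rw [hr d b (c * a), sub_self]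
  have h42 : (assoc d c (a * b) - assoc d (a * b) c) = (0 : A) := by rw [hr d c (a * b), sub_self]
  have h43 : (assoc d c (b * a) - assoc d (b * a) c) = (0 : A) := by rw [hr d c (b * a), sub_self]
  have h44 : (assoc a (b * c) d - assoc (b * c) a d) = (0 : A) := by rw [hl a (b * c) d, sub_self]
  have h45 : (assoc a (c * b) d - assoc (c * b) a d) = (0 : A) := by rw [hl a (c * b) d, sub_self]
  have h46 : (assoc a (d * b) c - assoc (d * b) a c) = (0 : A) := by rw [hl a (d * b) c, sub_self]
  have h47 : (assoc a (c * d) b - assoc (c * d) a b) = (0 : A) := by rw [hl a (c * d) b, sub_self]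
  have h48 : (assoc a (d * c) b - assoc (d * c) a b) = (0 : A) := by rw [hl a (d * c) b, sub_self]
  have h49 : (assoc b (a * d) c - assoc (a * d) b c) = (0 : A) := by rw [hl b (a * d) c, sub_self]
  have h50 : (assoc b (d * a) c - assoc (d * a) b c) = (0 : A) := by rw [hl b (d * a) c, sub_self]
  have h51 : (assoc c (a * b) d - assoc (a * b) c d) = (0 : A) := by rw [hl c (a * b) d, sub_self]
  have h52 : (assoc c (a * d) b - assoc (a * d) c b) = (0 : A) := by rw [hl c (a * d) b, sub_self]
  have h53 : (assoc c (d * a) b - assoc (d * a) c b) = (0 : A) := by rw [hl c (d * a) b, sub_self]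
  have key : assoc (brk a b) c d + assoc (brk a b) c d =
      (1 : ℤ) • ((assoc a b c - assoc b a c) * d) +
      (-1 : ℤ) • (d * (assoc a b c - assoc b a c)) +
      (-1 : ℤ) • (d * (assoc a b c - assoc a c b)) +
      (-1 : ℤ) • ((assoc a b d - assoc b a d) * c) +
      (1 : ℤ) • (c * (assoc a b d - assoc b a d)) +
      (1 : ℤ) • ((assoc a b d - assoc a d b) * c) +
      (-1 : ℤ) • (c * (assoc a b d - assoc a d b)) +
      (2 : ℤ) • (d * (assoc a c b - assoc c a b)) +
      (1 : ℤ) • ((assoc a c d - assoc c a d) * b) +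
      (-2 : ℤ) • (b * (assoc a c d - assoc c a d)) +
      (-1 : ℤ) • ((assoc a c d - assoc a d c) * b) +
      (2 : ℤ) • ((assoc a d b - assoc d a b) * c) +
      (-1 : ℤ) • (c * (assoc a d b - assoc d a b)) +
      (-3 : ℤ) • ((assoc a d c - assoc d a c) * b) +
      (-1 : ℤ) • ((assoc b a c - assoc b c a) * d) +
      (-1 : ℤ) • ((assoc b a d - assoc b d a) * c) +
      (1 : ℤ) • ((assoc b c a - assoc c b a) * d) +
      (2 : ℤ) • (a * (assoc b c d - assoc c b d)) +
      (-1 : ℤ) • (a * (assoc b c d - assoc b d c)) +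
      (-1 : ℤ) • ((assoc b d a - assoc d b a) * c) +
      (-1 : ℤ) • (a * (assoc b d c - assoc d b c)) +
      (1 : ℤ) • ((assoc c a d - assoc c d a) * b) +
      (2 : ℤ) • (a * (assoc c b d - assoc c d b)) +
      (2 : ℤ) • ((assoc c d a - assoc d c a) * b) +
      (2 : ℤ) • (a * (assoc c d b - assoc d c b)) +
      (-2 : ℤ) • (assoc a b (c * d) - assoc b a (c * d)) +
      (1 : ℤ) • (assoc a b (c * d) - assoc a (c * d) b) +
      (-2 : ℤ) • (assoc a d (b * c) - assoc d a (b * c)) +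
      (1 : ℤ) • (assoc a d (b * c) - assoc a (b * c) d) +
      (3 : ℤ) • (assoc a d (c * b) - assoc d a (c * b)) +
      (-1 : ℤ) • (assoc a d (c * b) - assoc a (c * b) d) +
      (-3 : ℤ) • (assoc b c (a * d) - assoc c b (a * d)) +
      (1 : ℤ) • (assoc b c (a * d) - assoc b (a * d) c) +
      (2 : ℤ) • (assoc b c (d * a) - assoc c b (d * a)) +
      (-2 : ℤ) • (assoc b c (d * a) - assoc b (d * a) c) +
      (-2 : ℤ) • (assoc b d (a * c) - assoc d b (a * c)) +
      (2 : ℤ) • (assoc b d (a * c) - assoc b (a * c) d) +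
      (2 : ℤ) • (assoc b d (c * a) - assoc d b (c * a)) +
      (-2 : ℤ) • (assoc b d (c * a) - assoc b (c * a) d) +
      (-2 : ℤ) • (assoc c b (a * d) - assoc c (a * d) b) +
      (2 : ℤ) • (assoc c b (d * a) - assoc c (d * a) b) +
      (-1 : ℤ) • (assoc c d (a * b) - assoc c (a * b) d) +
      (-1 : ℤ) • (assoc c d (b * a) - assoc d c (b * a)) +
      (1 : ℤ) • (assoc c d (b * a) - assoc c (b * a) d) +
      (-3 : ℤ) • (assoc d b (a * c) - assoc d (a * c) b) +
      (2 : ℤ) • (assoc d b (c * a) - assoc d (c * a) b) +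
      (2 : ℤ) • (assoc d c (a * b) - assoc d (a * b) c) +
      (-1 : ℤ) • (assoc d c (b * a) - assoc d (b * a) c) +
      (2 : ℤ) • (assoc a (b * c) d - assoc (b * c) a d) +
      (-1 : ℤ) • (assoc a (c * b) d - assoc (c * b) a d) +
      (1 : ℤ) • (assoc a (d * b) c - assoc (d * b) a c) +
      (1 : ℤ) • (assoc a (c * d) b - assoc (c * d) a b) +
      (-2 : ℤ) • (assoc a (d * c) b - assoc (d * c) a b) +
      (1 : ℤ) • (assoc b (a * d) c - assoc (a * d) b c) +
      (-2 : ℤ) • (assoc b (d * a) c - assoc (d * a) b c) +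
      (-1 : ℤ) • (assoc c (a * b) d - assoc (a * b) c d) +
      (-2 : ℤ) • (assoc c (a * d) b - assoc (a * d) c b) +
      (3 : ℤ) • (assoc c (d * a) b - assoc (d * a) c b) := by
    simp only [assoc, brk, mul_sub, sub_mul, mul_add, add_mul, smul_sub, smul_add]
    abel
  rw [key, h1, h2, h3, h4, h5, h6, h7, h8, h9, h10, h11, h12, h13, h14, h15, h16, h17, h18, h19, h20, h21, h22, h23, h24, h25, h26, h27, h28, h29, h30, h31, h32, h33, h34, h35, h36, h37, h38, h39, h40, h41, h42, h43, h44, h45, h46, h47, h48, h49, h50, h51, h52, h53]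
  simp

private theorem main1 {A : Type*} [NonUnitalNonAssocRing A]
    (hl : ∀ a b c : A, assoc a b c = assoc b a c)
    (hr : ∀ a b c : A, assoc a b c = assoc a c b)
    (a b c d e : A) :
    (24 : ℤ) • (brk a b * assoc c d e) = 0 := by
  have h1 : (assoc (brk a b) c d + assoc (brk a b) c d) = (0 : A) := nucl hl hr a b c d
  have h2 : (assoc (brk a c) b d + assoc (brk a c) b d) = (0 : A) := nucl hl hr a c b d
  have h3 : (assoc (brk a c) d b + assoc (brk a c) d b) = (0 : A) := nucl hl hr a c d b
  have h4 : (assoc (brk a d) b c + assoc (brk a d) b c) = (0 : A) := nucl hl hr a d b c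
  have h5 : (assoc (brk a d) c b + assoc (brk a d) c b) = (0 : A) := nucl hl hr a d c b
  have h6 : (assoc (brk b c) a d + assoc (brk b c) a d) = (0 : A) := nucl hl hr b c a d
  have h7 : (assoc (brk b c) d a + assoc (brk b c) d a) = (0 : A) := nucl hl hr b c d a
  have h8 : (assoc (brk b d) a c + assoc (brk b d) a c) = (0 : A) := nucl hl hr b d a c
  have h9 : (assoc (brk b d) c a + assoc (brk b d) c a) = (0 : A) := nucl hl hr b d c a
  have h10 : (assoc (brk c d) a b + assoc (brk c d) a b) = (0 : A) := nucl hl hr c d a b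
  have h11 : (assoc (brk c d) b a + assoc (brk c d) b a) = (0 : A) := nucl hl hr c d b a
  have h12 : (assoc (brk a b) c (d * e) + assoc (brk a b) c (d * e)) = (0 : A) := nucl hl hr a b c (d * e)
  have h13 : (assoc (brk a c) b (d * e) + assoc (brk a c) b (d * e)) = (0 : A) := nucl hl hr a c b (d * e)
  have h14 : (assoc (brk a c) d (b * e) + assoc (brk a c) d (b * e)) = (0 : A) := nucl hl hr a c d (b * e)
  have h15 : (assoc (brk a d) b (c * e) + assoc (brk a d) b (c * e)) = (0 : A) := nucl hl hr a d b (c * e)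
  have h16 : (assoc (brk a d) c (b * e) + assoc (brk a d) c (b * e)) = (0 : A) := nucl hl hr a d c (b * e)
  have h17 : (assoc (brk b c) a (d * e) + assoc (brk b c) a (d * e)) = (0 : A) := nucl hl hr b c a (d * e)
  have h18 : (assoc (brk b c) d (a * e) + assoc (brk b c) d (a * e)) = (0 : A) := nucl hl hr b c d (a * e)
  have h19 : (assoc (brk b d) a (c * e) + assoc (brk b d) a (c * e)) = (0 : A) := nucl hl hr b d a (c * e)
  have h20 : (assoc (brk b d) c (a * e) + assoc (brk b d) c (a * e)) = (0 : A) := nucl hl hr b d c (a * e)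
  have h21 : (assoc (brk c d) a (b * e) + assoc (brk c d) a (b * e)) = (0 : A) := nucl hl hr c d a (b * e)
  have h22 : (assoc (brk c d) b (a * e) + assoc (brk c d) b (a * e)) = (0 : A) := nucl hl hr c d b (a * e)
  have h23 : (assoc (brk a b) (c * d) e + assoc (brk a b) (c * d) e) = (0 : A) := nucl hl hr a b (c * d) e
  have h24 : (assoc (brk a c) (b * d) e + assoc (brk a c) (b * d) e) = (0 : A) := nucl hl hr a c (b * d) e
  have h25 : (assoc (brk a c) (d * b) e + assoc (brk a c) (d * b) e) = (0 : A) := nucl hl hr a c (d * b) e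
  have h26 : (assoc (brk a d) (b * c) e + assoc (brk a d) (b * c) e) = (0 : A) := nucl hl hr a d (b * c) e
  have h27 : (assoc (brk a d) (c * b) e + assoc (brk a d) (c * b) e) = (0 : A) := nucl hl hr a d (c * b) e
  have h28 : (assoc (brk b c) (a * d) e + assoc (brk b c) (a * d) e) = (0 : A) := nucl hl hr b c (a * d) e
  have h29 : (assoc (brk b c) (d * a) e + assoc (brk b c) (d * a) e) = (0 : A) := nucl hl hr b c (d * a) e
  have h30 : (assoc (brk b d) (a * c) e + assoc (brk b d) (a * c) e) = (0 : A) := nucl hl hr b d (a * c) e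
  have h31 : (assoc (brk b d) (c * a) e + assoc (brk b d) (c * a) e) = (0 : A) := nucl hl hr b d (c * a) e
  have h32 : (assoc (brk c d) (a * b) e + assoc (brk c d) (a * b) e) = (0 : A) := nucl hl hr c d (a * b) e
  have h33 : (assoc (brk c d) (b * a) e + assoc (brk c d) (b * a) e) = (0 : A) := nucl hl hr c d (b * a) e
  have h34 : (assoc (brk a (b * c)) d e + assoc (brk a (b * c)) d e) = (0 : A) := nucl hl hr a (b * c) d e
  have h35 : (assoc (brk a (c * b)) d e + assoc (brk a (c * b)) d e) = (0 : A) := nucl hl hr a (c * b) d e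
  have h36 : (assoc (brk a (b * d)) c e + assoc (brk a (b * d)) c e) = (0 : A) := nucl hl hr a (b * d) c e
  have h37 : (assoc (brk a (d * b)) c e + assoc (brk a (d * b)) c e) = (0 : A) := nucl hl hr a (d * b) c e
  have h38 : (assoc (brk a (c * d)) b e + assoc (brk a (c * d)) b e) = (0 : A) := nucl hl hr a (c * d) b e
  have h39 : (assoc (brk a (d * c)) b e + assoc (brk a (d * c)) b e) = (0 : A) := nucl hl hr a (d * c) b e
  have h40 : (assoc (brk b (a * c)) d e + assoc (brk b (a * c)) d e) = (0 : A) := nucl hl hr b (a * c) d e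
  have h41 : (assoc (brk b (c * a)) d e + assoc (brk b (c * a)) d e) = (0 : A) := nucl hl hr b (c * a) d e
  have h42 : (assoc (brk b (d * a)) c e + assoc (brk b (d * a)) c e) = (0 : A) := nucl hl hr b (d * a) c e
  have h43 : (assoc (brk b (c * d)) a e + assoc (brk b (c * d)) a e) = (0 : A) := nucl hl hr b (c * d) a e
  have h44 : (assoc (brk b (d * c)) a e + assoc (brk b (d * c)) a e) = (0 : A) := nucl hl hr b (d * c) a e
  have h45 : (assoc (brk c (a * b)) d e + assoc (brk c (a * b)) d e) = (0 : A) := nucl hl hr c (a * b) d e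
  have h46 : (assoc (brk c (a * d)) b e + assoc (brk c (a * d)) b e) = (0 : A) := nucl hl hr c (a * d) b e
  have h47 : (assoc (brk c (d * a)) b e + assoc (brk c (d * a)) b e) = (0 : A) := nucl hl hr c (d * a) b e
  have h48 : (assoc (brk c (b * d)) a e + assoc (brk c (b * d)) a e) = (0 : A) := nucl hl hr c (b * d) a e
  have h49 : (assoc (brk d (a * b)) c e + assoc (brk d (a * b)) c e) = (0 : A) := nucl hl hr d (a * b) c e
  have h50 : (assoc (brk d (a * c)) b e + assoc (brk d (a * c)) b e) = (0 : A) := nucl hl hr d (a * c) b e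
  have h51 : (assoc (brk d (b * c)) a e + assoc (brk d (b * c)) a e) = (0 : A) := nucl hl hr d (b * c) a e
  have h52 : (assoc a b c - assoc b a c) = (0 : A) := by rw [hl a b c, sub_self]
  have h53 : (assoc a b c - assoc a c b) = (0 : A) := by rw [hr a b c, sub_self]
  have h54 : (assoc a b d - assoc b a d) = (0 : A) := by rw [hl a b d, sub_self]
  have h55 : (assoc a b d - assoc a d b) = (0 : A) := by rw [hr a b d, sub_self]
  have h56 : (assoc a b e - assoc b a e) = (0 : A) := by rw [hl a b e, sub_self]
  have h57 : (assoc a c b - assoc c a b) = (0 : A) := by rw [hl a c b, sub_self]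
  have h58 : (assoc a c d - assoc c a d) = (0 : A) := by rw [hl a c d, sub_self]
  have h59 : (assoc a c d - assoc a d c) = (0 : A) := by rw [hr a c d, sub_self]
  have h60 : (assoc a c e - assoc c a e) = (0 : A) := by rw [hl a c e, sub_self]
  have h61 : (assoc a d b - assoc d a b) = (0 : A) := by rw [hl a d b, sub_self]
  have h62 : (assoc a d c - assoc d a c) = (0 : A) := by rw [hl a d c, sub_self]
  have h63 : (assoc a d e - assoc d a e) = (0 : A) := by rw [hl a d e, sub_self]
  have h64 : (assoc b a c - assoc b c a) = (0 : A) := by rw [hr b a c, sub_self]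
  have h65 : (assoc b a d - assoc b d a) = (0 : A) := by rw [hr b a d, sub_self]
  have h66 : (assoc b c d - assoc c b d) = (0 : A) := by rw [hl b c d, sub_self]
  have h67 : (assoc b c d - assoc b d c) = (0 : A) := by rw [hr b c d, sub_self]
  have h68 : (assoc b c e - assoc c b e) = (0 : A) := by rw [hl b c e, sub_self]
  have h69 : (assoc b d c - assoc d b c) = (0 : A) := by rw [hl b d c, sub_self]
  have h70 : (assoc b d e - assoc d b e) = (0 : A) := by rw [hl b d e, sub_self]
  have h71 : (assoc c a d - assoc c d a) = (0 : A) := by rw [hr c a d, sub_self]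
  have key : ((24 : ℤ) • (brk a b * assoc c d e) : A) =
      (-12 : ℤ) • ((assoc (brk a b) c d + assoc (brk a b) c d) * e) +
      (-9 : ℤ) • ((assoc (brk a c) b d + assoc (brk a c) b d) * e) +
      (9 : ℤ) • ((assoc (brk a c) d b + assoc (brk a c) d b) * e) +
      (-3 : ℤ) • ((assoc (brk a d) b c + assoc (brk a d) b c) * e) +
      (3 : ℤ) • ((assoc (brk a d) c b + assoc (brk a d) c b) * e) +
      (3 : ℤ) • ((assoc (brk b c) a d + assoc (brk b c) a d) * e) +
      (-3 : ℤ) • ((assoc (brk b c) d a + assoc (brk b c) d a) * e) +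
      (-3 : ℤ) • ((assoc (brk b d) a c + assoc (brk b d) a c) * e) +
      (3 : ℤ) • ((assoc (brk b d) c a + assoc (brk b d) c a) * e) +
      (-6 : ℤ) • ((assoc (brk c d) a b + assoc (brk c d) a b) * e) +
      (6 : ℤ) • ((assoc (brk c d) b a + assoc (brk c d) b a) * e) +
      (12 : ℤ) • (assoc (brk a b) c (d * e) + assoc (brk a b) c (d * e)) +
      (9 : ℤ) • (assoc (brk a c) b (d * e) + assoc (brk a c) b (d * e)) +
      (-9 : ℤ) • (assoc (brk a c) d (b * e) + assoc (brk a c) d (b * e)) +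
      (3 : ℤ) • (assoc (brk a d) b (c * e) + assoc (brk a d) b (c * e)) +
      (-3 : ℤ) • (assoc (brk a d) c (b * e) + assoc (brk a d) c (b * e)) +
      (-3 : ℤ) • (assoc (brk b c) a (d * e) + assoc (brk b c) a (d * e)) +
      (3 : ℤ) • (assoc (brk b c) d (a * e) + assoc (brk b c) d (a * e)) +
      (3 : ℤ) • (assoc (brk b d) a (c * e) + assoc (brk b d) a (c * e)) +
      (-3 : ℤ) • (assoc (brk b d) c (a * e) + assoc (brk b d) c (a * e)) +
      (6 : ℤ) • (assoc (brk c d) a (b * e) + assoc (brk c d) a (b * e)) +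
      (-6 : ℤ) • (assoc (brk c d) b (a * e) + assoc (brk c d) b (a * e)) +
      (-12 : ℤ) • (assoc (brk a b) (c * d) e + assoc (brk a b) (c * d) e) +
      (-9 : ℤ) • (assoc (brk a c) (b * d) e + assoc (brk a c) (b * d) e) +
      (9 : ℤ) • (assoc (brk a c) (d * b) e + assoc (brk a c) (d * b) e) +
      (-3 : ℤ) • (assoc (brk a d) (b * c) e + assoc (brk a d) (b * c) e) +
      (3 : ℤ) • (assoc (brk a d) (c * b) e + assoc (brk a d) (c * b) e) +
      (3 : ℤ) • (assoc (brk b c) (a * d) e + assoc (brk b c) (a * d) e) +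
      (-3 : ℤ) • (assoc (brk b c) (d * a) e + assoc (brk b c) (d * a) e) +
      (-3 : ℤ) • (assoc (brk b d) (a * c) e + assoc (brk b d) (a * c) e) +
      (3 : ℤ) • (assoc (brk b d) (c * a) e + assoc (brk b d) (c * a) e) +
      (-6 : ℤ) • (assoc (brk c d) (a * b) e + assoc (brk c d) (a * b) e) +
      (6 : ℤ) • (assoc (brk c d) (b * a) e + assoc (brk c d) (b * a) e) +
      (10 : ℤ) • (assoc (brk a (b * c)) d e + assoc (brk a (b * c)) d e) +
      (-3 : ℤ) • (assoc (brk a (c * b)) d e + assoc (brk a (c * b)) d e) +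
      (-2 : ℤ) • (assoc (brk a (b * d)) c e + assoc (brk a (b * d)) c e) +
      (3 : ℤ) • (assoc (brk a (d * b)) c e + assoc (brk a (d * b)) c e) +
      (-10 : ℤ) • (assoc (brk a (c * d)) b e + assoc (brk a (c * d)) b e) +
      (6 : ℤ) • (assoc (brk a (d * c)) b e + assoc (brk a (d * c)) b e) +
      (-12 : ℤ) • (assoc (brk b (a * c)) d e + assoc (brk b (a * c)) d e) +
      (7 : ℤ) • (assoc (brk b (c * a)) d e + assoc (brk b (c * a)) d e) +
      (1 : ℤ) • (assoc (brk b (d * a)) c e + assoc (brk b (d * a)) c e) +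
      (6 : ℤ) • (assoc (brk b (c * d)) a e + assoc (brk b (c * d)) a e) +
      (-6 : ℤ) • (assoc (brk b (d * c)) a e + assoc (brk b (d * c)) a e) +
      (-2 : ℤ) • (assoc (brk c (a * b)) d e + assoc (brk c (a * b)) d e) +
      (9 : ℤ) • (assoc (brk c (a * d)) b e + assoc (brk c (a * d)) b e) +
      (-4 : ℤ) • (assoc (brk c (d * a)) b e + assoc (brk c (d * a)) b e) +
      (-3 : ℤ) • (assoc (brk c (b * d)) a e + assoc (brk c (b * d)) a e) +
      (-2 : ℤ) • (assoc (brk d (a * b)) c e + assoc (brk d (a * b)) c e) +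
      (-1 : ℤ) • (assoc (brk d (a * c)) b e + assoc (brk d (a * c)) b e) +
      (3 : ℤ) • (assoc (brk d (b * c)) a e + assoc (brk d (b * c)) a e) +
      (-10 : ℤ) • ((assoc a b c - assoc b a c) * (d * e)) +
      (10 : ℤ) • (((assoc a b c - assoc b a c) * d) * e) +
      (-10 : ℤ) • ((assoc a b c - assoc a c b) * (d * e)) +
      (10 : ℤ) • (((assoc a b c - assoc a c b) * d) * e) +
      (2 : ℤ) • ((assoc a b d - assoc b a d) * (c * e)) +
      (-2 : ℤ) • (((assoc a b d - assoc b a d) * c) * e) +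
      (2 : ℤ) • ((assoc a b d - assoc a d b) * (c * e)) +
      (-2 : ℤ) • (((assoc a b d - assoc a d b) * c) * e) +
      (-12 : ℤ) • ((c * d) * (assoc a b e - assoc b a e)) +
      (12 : ℤ) • ((d * c) * (assoc a b e - assoc b a e)) +
      (-4 : ℤ) • ((assoc a c b - assoc c a b) * (d * e)) +
      (4 : ℤ) • (((assoc a c b - assoc c a b) * d) * e) +
      (10 : ℤ) • ((assoc a c d - assoc c a d) * (b * e)) +
      (-10 : ℤ) • (((assoc a c d - assoc c a d) * b) * e) +
      (10 : ℤ) • ((assoc a c d - assoc a d c) * (b * e)) +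
      (-10 : ℤ) • (((assoc a c d - assoc a d c) * b) * e) +
      (-6 : ℤ) • ((b * d) * (assoc a c e - assoc c a e)) +
      (6 : ℤ) • ((d * b) * (assoc a c e - assoc c a e)) +
      (-4 : ℤ) • ((assoc a d b - assoc d a b) * (c * e)) +
      (4 : ℤ) • (((assoc a d b - assoc d a b) * c) * e) +
      (-2 : ℤ) • ((assoc a d c - assoc d a c) * (b * e)) +
      (2 : ℤ) • (((assoc a d c - assoc d a c) * b) * e) +
      (6 : ℤ) • ((b * c) * (assoc a d e - assoc d a e)) +
      (-6 : ℤ) • ((c * b) * (assoc a d e - assoc d a e)) +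
      (14 : ℤ) • ((assoc b a c - assoc b c a) * (d * e)) +
      (-14 : ℤ) • (((assoc b a c - assoc b c a) * d) * e) +
      (2 : ℤ) • ((assoc b a d - assoc b d a) * (c * e)) +
      (-2 : ℤ) • (((assoc b a d - assoc b d a) * c) * e) +
      (-6 : ℤ) • ((assoc b c d - assoc c b d) * (a * e)) +
      (6 : ℤ) • (((assoc b c d - assoc c b d) * a) * e) +
      (-6 : ℤ) • ((assoc b c d - assoc b d c) * (a * e)) +
      (6 : ℤ) • (((assoc b c d - assoc b d c) * a) * e) +
      (-6 : ℤ) • ((a * d) * (assoc b c e - assoc c b e)) +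
      (6 : ℤ) • ((d * a) * (assoc b c e - assoc c b e)) +
      (6 : ℤ) • ((assoc b d c - assoc d b c) * (a * e)) +
      (-6 : ℤ) • (((assoc b d c - assoc d b c) * a) * e) +
      (-18 : ℤ) • ((a * c) * (assoc b d e - assoc d b e)) +
      (18 : ℤ) • ((c * a) * (assoc b d e - assoc d b e)) +
      (-8 : ℤ) • ((assoc c a d - assoc c d a) * (b * e)) +
      (8 : ℤ) • (((assoc c a d - assoc c d a) * b) * e) := by
    simp only [assoc, brk, mul_sub, sub_mul, mul_add, add_mul, smul_sub, smul_add]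
    abel
  rw [key, h1, h2, h3, h4, h5, h6, h7, h8, h9, h10, h11, h12, h13, h14, h15, h16, h17, h18, h19, h20, h21, h22, h23, h24, h25, h26, h27, h28, h29, h30, h31, h32, h33, h34, h35, h36, h37, h38, h39, h40, h41, h42, h43, h44, h45, h46, h47, h48, h49, h50, h51, h52, h53, h54, h55, h56, h57, h58, h59, h60, h61, h62, h63, h64, h65, h66, h67, h68, h69, h70, h71]
  simp

end Aux

theorem stmt4 (h2 : (2 : K) ≠ 0) (h3 : (3 : K) ≠ 0)
    (hl : ∀ a b c : A, assoc a b c = assoc b a c)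
    (hr : ∀ a b c : A, assoc a b c = assoc a c b)
    (a b c d e : A) :
    brk a b * assoc c d e = 0 ∧ assoc a b c * brk d e = 0 := by
  have hM : ((24 : ℤ) : K) ≠ 0 := by
    have h : ((24 : ℤ) : K) = 2 * 2 * 2 * 3 := by norm_num
    rw [h]
    exact mul_ne_zero (mul_ne_zero (mul_ne_zero h2 h2) h2) h3
  have kill : ∀ x : A, (24 : ℤ) • x = 0 → x = 0 := by
    intro x hx
    have hx' : ((24 : ℤ) : K) • x = 0 := by
      rw [Int.cast_smul_eq_zsmul]; exact hx
    have h := congrArg (fun y => ((24 : ℤ) : K)⁻¹ • y) hx'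
    simp only [smul_smul, inv_mul_cancel₀ hM, one_smul, smul_zero] at h
    exact h
  have hl' : ∀ x y z : Aᵐᵒᵖ, assoc x y z = assoc y x z := by
    intro x y z
    apply MulOpposite.unop_injective
    simp only [assoc, MulOpposite.unop_sub, MulOpposite.unop_mul]
    have h := hr z.unop y.unop x.unop
    simp only [assoc] at h
    have h2 := congrArg Neg.neg h
    simp only [neg_sub] at h2
    exact h2
  have hr' : ∀ x y z : Aᵐᵒᵖ, assoc x y z = assoc x z y := by
    intro x y z
    apply MulOpposite.unop_injective
    simp only [assoc, MulOpposite.unop_sub, MulOpposite.unop_mul]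
    have h := hl z.unop y.unop x.unop
    simp only [assoc] at h
    have h2 := congrArg Neg.neg h
    simp only [neg_sub] at h2
    exact h2
  refine ⟨kill _ (main1 hl hr a b c d e), ?_⟩
  have H := main1 hl' hr' (MulOpposite.op e) (MulOpposite.op d) (MulOpposite.op c)
    (MulOpposite.op b) (MulOpposite.op a)
  have e1 : brk (MulOpposite.op e) (MulOpposite.op d) *
      assoc (MulOpposite.op c) (MulOpposite.op b) (MulOpposite.op a)
      = MulOpposite.op (-(assoc a b c * brk d e)) := by
    apply MulOpposite.unop_injective
    simp only [assoc, brk, MulOpposite.unop_mul, MulOpposite.unop_sub,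
      MulOpposite.unop_op, MulOpposite.unop_neg, mul_sub, sub_mul]
    abel
  rw [e1] at H
  have H2 : (24 : ℤ) • (assoc a b c * brk d e) = 0 := by
    have h := congrArg MulOpposite.unop H
    simp only [MulOpposite.unop_smul, MulOpposite.unop_op, MulOpposite.unop_zero,
      smul_neg, neg_eq_zero] at h
    exact h
  exact kill _ H2
end

section
/- Let A be an assosymmetric algebra over a field of characteristic ≠ 2, 3, and let a ∈ [A,A] (i.e., a is a sum of commutators). Then the adjoint map ad a : b ↦ [a,b] is a derivation of A: [a, bc] = [a,b]c + b[a,c] for all b, c ∈ A. -/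
variable {K A : Type*} [Field K] [NonUnitalNonAssocRing A] [Module K A]
  [IsScalarTower K A A] [SMulCommClass K A A]

/-!
The associator of an assosymmetric ring is totally symmetric, so the cocycle (Teichmüller)
identity, taken at eight permutations of four letters, only involves associators
`(pq, r, s)` and the terms `p (q, r, s)`, `(p, q, r) s`. Two combinations in which the latter
cancel express `([u, v], x, y)` as `G` and as `-G` for the same `G`, so `2 ([u, v], x, y) = 0`.
Hence without 2-torsion every sum of commutators `a` lies in the left nucleus, and then
`[a, bc] - [a, b] c - b [a, c] = (a, b, c) - (b, a, c) + (b, c, a)` vanishes by symmetry.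
-/

theorem assoc_cocycle (w x y z : A) :
    assoc (w * x) y z - assoc w (x * y) z + assoc w x (y * z) =
      w * assoc x y z + assoc w x y * z := by
  simp only [assoc, mul_sub, sub_mul]
  abel

theorem assoc_sub_left (p q x y : A) : assoc (p - q) x y = assoc p x y - assoc q x y := by
  simp only [assoc, sub_mul]
  abel

theorem assoc_add_left (p q x y : A) : assoc (p + q) x y = assoc p x y + assoc q x y := by
  simp only [assoc, add_mul]
  abel

theorem brk_mul_eq (a b c : A) :
    brk a (b * c) = brk a b * c + b * brk a c + (assoc a b c - assoc b a c + assoc b c a) := by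
  simp only [brk, assoc, mul_sub, sub_mul]
  abel

variable (A) in
def leftNucleus : AddSubgroup A where
  carrier := {a | ∀ x y : A, assoc a x y = 0}
  zero_mem' x y := by simp [assoc]
  add_mem' {p q} hp hq x y := by rw [assoc_add_left, hp x y, hq x y, add_zero]
  neg_mem' {p} hp x y := by
    rw [← zero_sub, assoc_sub_left, hp x y, sub_zero]
    simp [assoc]

theorem assoc_brk_left_eq (hl : ∀ a b c : A, assoc a b c = assoc b a c)
    (hr : ∀ a b c : A, assoc a b c = assoc a c b) (u v x y : A) :
    assoc (brk u v) x y =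
      assoc (x * u) v y - assoc (x * v) u y + assoc (v * y) u x - assoc (u * y) v x := by
  have h1 := assoc_cocycle u v x y
  have h2 := assoc_cocycle v u x y
  have h3 := assoc_cocycle u x v y
  have h4 := assoc_cocycle v x u y
  rw [brk, assoc_sub_left]
  -- ordered rewriting by the two transpositions sorts the arguments of every associator
  simp only [hl, hr] at h1 h2 h3 h4 ⊢
  linear_combination (norm := abel) h1 - h2 - h3 + h4

theorem assoc_brk_left_eq_neg (hl : ∀ a b c : A, assoc a b c = assoc b a c)
    (hr : ∀ a b c : A, assoc a b c = assoc a c b) (u v x y : A) :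
    assoc (brk u v) x y =
      -(assoc (x * u) v y - assoc (x * v) u y + assoc (v * y) u x - assoc (u * y) v x) := by
  have h1 := assoc_cocycle u v x y
  have h2 := assoc_cocycle v u x y
  have h3 := assoc_cocycle u x y v
  have h4 := assoc_cocycle v x y u
  have h5 := assoc_cocycle x u y v
  have h6 := assoc_cocycle x v y u
  rw [brk, assoc_sub_left]
  simp only [hl, hr] at h1 h2 h3 h4 h5 h6 ⊢
  linear_combination (norm := abel) h1 - h2 - h3 + h4 + h5 - h6

theorem two_nsmul_assoc_brk_left (hl : ∀ a b c : A, assoc a b c = assoc b a c)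
    (hr : ∀ a b c : A, assoc a b c = assoc a c b) (u v x y : A) :
    2 • assoc (brk u v) x y = 0 := by
  rw [two_nsmul]
  nth_rw 1 [assoc_brk_left_eq hl hr]
  rw [assoc_brk_left_eq_neg hl hr, add_neg_cancel]

theorem brk_mem_leftNucleus (hl : ∀ a b c : A, assoc a b c = assoc b a c)
    (hr : ∀ a b c : A, assoc a b c = assoc a c b)
    (h2 : IsSMulRegular A 2) (u v : A) : brk u v ∈ leftNucleus A :=
  fun x y => h2 <| (two_nsmul_assoc_brk_left hl hr u v x y).trans (smul_zero 2).symm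

theorem brk_mul_of_mem_leftNucleus (hl : ∀ a b c : A, assoc a b c = assoc b a c)
    (hr : ∀ a b c : A, assoc a b c = assoc a c b)
    {a : A} (ha : a ∈ leftNucleus A) (b c : A) :
    brk a (b * c) = brk a b * c + b * brk a c := by
  have hbac : assoc b a c = 0 := by rw [← hl]; exact ha b c
  have hbca : assoc b c a = 0 := by rw [← hr]; exact hbac
  rw [brk_mul_eq, ha b c, hbac, hbca, sub_zero, add_zero, add_zero]

theorem stmt6_general (h2 : (2 : K) ≠ 0)
    (hl : ∀ a b c : A, assoc a b c = assoc b a c)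
    (hr : ∀ a b c : A, assoc a b c = assoc a c b)
    (a : A) (ha : a ∈ AddSubgroup.closure {x : A | ∃ y z : A, x = brk y z}) :
    ∀ b c : A, brk a (b * c) = brk a b * c + b * brk a c := by
  have h2A : IsSMulRegular A 2 := by
    have h2K : IsSMulRegular A ((2 : ℕ) : K) := .of_ne_zero (by exact_mod_cast h2)
    exact fun x y hxy => h2K (by simpa only [Nat.cast_smul_eq_nsmul] using hxy)
  refine brk_mul_of_mem_leftNucleus hl hr ((AddSubgroup.closure_le _).2 ?_ ha)
  rintro _ ⟨u, v, rfl⟩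
  exact brk_mem_leftNucleus hl hr h2A u v

theorem stmt6 (h2 : (2 : K) ≠ 0) (h3 : (3 : K) ≠ 0)
    (hl : ∀ a b c : A, assoc a b c = assoc b a c)
    (hr : ∀ a b c : A, assoc a b c = assoc a c b)
    (a : A) (ha : a ∈ AddSubgroup.closure {x : A | ∃ y z : A, x = brk y z}) :
    ∀ b c : A, brk a (b * c) = brk a b * c + b * brk a c :=
  stmt6_general h2 hl hr a ha
end

section
/- Let A be an assosymmetric algebra over a field of characteristic ≠ 2, 3. Then for all a, b, c in A: [(a,b,b), a] ⋆ [[a,b],c] = 0, where ⋆ is the Jordan product x⋆y = xy + yx. -/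
variable {K A : Type*} [Field K] [NonUnitalNonAssocRing A] [Module K A]
  [IsScalarTower K A A] [SMulCommClass K A A]

set_option linter.unusedSectionVars false
set_option maxHeartbeats 1000000

theorem smul_cancelK {c : K} (hc : c ≠ 0) {x : A} (h : c • x = 0) : x = 0 := by
  have := congrArg (fun t => c⁻¹ • t) h
  simpa [inv_smul_smul₀ hc] using this

theorem int_smul_cancel (h2 : (2:K) ≠ 0) {x : A} (h : (2:ℤ) • x = 0) : x = 0 := by
  apply smul_cancelK h2
  rw [show ((2:K)) = ((2:ℤ):K) by norm_num, Int.cast_smul_eq_zsmul]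
  exact h

theorem three_smul_cancel (h3 : (3:K) ≠ 0) {x : A} (h : (3:ℤ) • x = 0) : x = 0 := by
  apply smul_cancelK h3
  rw [show ((3:K)) = ((3:ℤ):K) by norm_num, Int.cast_smul_eq_zsmul]
  exact h

theorem assoc_sub₃ (x y s t : A) : assoc x y (s - t) = assoc x y s - assoc x y t := by
  simp only [assoc, mul_sub, sub_mul]; abel

theorem brk_anti (p q : A) : brk p q = -brk q p := by
  simp only [brk, neg_sub]

theorem Teich (a b c d : A) :
    assoc (a*b) c d - assoc a (b*c) d + assoc a b (c*d) = a * assoc b c d + assoc a b c * d := by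
  simp only [assoc, mul_sub, sub_mul, mul_add, add_mul]
  abel

theorem CN (hl : ∀ a b c : A, assoc a b c = assoc b a c)
    (hr : ∀ a b c : A, assoc a b c = assoc a c b)
    (h2 : (2:K) ≠ 0) (x y z w : A) : assoc x y (brk z w) = 0 := by
  have key : (2:ℤ) • (assoc x y (z*w) - assoc x y (w*z)) =
      ((1:ℤ) • (assoc w (y * z) x - assoc w x (y * z))) +
      ((-1:ℤ) • (assoc w (y * z) x - assoc (y * z) w x)) +
      ((-1:ℤ) • ((assoc w z y - assoc w y z) * x)) +
      ((-1:ℤ) • (assoc w (z * y) x - assoc w x (z * y))) +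
      ((2:ℤ) • (assoc y x (w * z) - assoc x y (w * z))) +
      ((-1:ℤ) • (z * (assoc w x y - assoc x w y))) +
      ((1:ℤ) • (z * (assoc w y x - assoc y w x))) +
      ((-1:ℤ) • (assoc w z (x * y) - assoc w (x * y) z)) +
      ((-1:ℤ) • (assoc w (y * x) z - assoc (y * x) w z)) +
      ((-1:ℤ) • (assoc w z (y * x) - assoc w (y * x) z)) +
      ((2:ℤ) • (assoc w z (y * x) - assoc z w (y * x))) +
      ((-1:ℤ) • ((assoc z w x - assoc z x w) * y)) +
      ((1:ℤ) • (assoc z (w * y) x - assoc z x (w * y))) +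
      ((-1:ℤ) • (w * (assoc z y x - assoc y z x))) +
      ((1:ℤ) • (assoc w y (x * z) - assoc w (x * z) y)) +
      ((-1:ℤ) • (assoc w y (x * z) - assoc y w (x * z))) +
      ((1:ℤ) • (y * (assoc w z x - assoc w x z))) +
      ((1:ℤ) • ((assoc w z x - assoc w x z) * y)) +
      ((1:ℤ) • (assoc w (z * x) y - assoc (z * x) w y)) +
      ((1:ℤ) • ((assoc z w y - assoc z y w) * x)) +
      ((1:ℤ) • (assoc z (y * w) x - assoc (y * w) z x)) +
      ((-1:ℤ) • (assoc z (y * w) x - assoc z x (y * w))) +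
      ((-1:ℤ) • (assoc z (w * x) y - assoc (w * x) z y)) +
      ((1:ℤ) • (w * (assoc z x y - assoc x z y))) +
      ((1:ℤ) • (assoc (w * z) y x - assoc (w * z) x y)) +
      ((1:ℤ) • (assoc z (y * x) w - assoc (y * x) z w)) +
      ((1:ℤ) • (assoc z w (y * x) - assoc z (y * x) w)) +
      ((-1:ℤ) • (assoc (z * w) y x - assoc (z * w) x y)) +
      ((1:ℤ) • (y * (assoc w x z - assoc x w z))) +
      ((1:ℤ) • (assoc y z (x * w) - assoc y (x * w) z)) +
      ((-1:ℤ) • (y * (assoc z w x - assoc z x w))) +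
      ((1:ℤ) • (assoc z y (x * w) - assoc y z (x * w))) +
      ((-1:ℤ) • (assoc z y (x * w) - assoc z (x * w) y)) +
      ((1:ℤ) • (z * (assoc y w x - assoc y x w))) +
      ((-1:ℤ) • ((assoc w y z - assoc y w z) * x)) +
      ((1:ℤ) • (assoc y (w * z) x - assoc y x (w * z))) +
      ((-1:ℤ) • (assoc y w (z * x) - assoc y (z * x) w)) +
      ((-1:ℤ) • ((assoc z y x - assoc y z x) * w)) +
      ((-1:ℤ) • (assoc y (z * w) x - assoc y x (z * w))) +
      ((-1:ℤ) • (y * (assoc z x w - assoc x z w))) +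
      ((-1:ℤ) • (assoc y w (x * z) - assoc y (x * z) w)) +
      ((-1:ℤ) • ((assoc y z x - assoc y x z) * w)) +
      ((1:ℤ) • ((assoc z y w - assoc y z w) * x)) +
      ((1:ℤ) • (z * (assoc y x w - assoc x y w))) +
      ((1:ℤ) • (assoc z w (x * y) - assoc z (x * y) w)) +
      ((1:ℤ) • ((assoc z y x - assoc z x y) * w)) +
      ((-2:ℤ) • (assoc y x (z * w) - assoc x y (z * w))) +
      ((1:ℤ) • (assoc y (w * x) z - assoc (w * x) y z)) +
      ((-1:ℤ) • (w * (assoc y x z - assoc x y z))) +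
      ((-1:ℤ) • (w * (assoc y z x - assoc y x z))) +
      ((1:ℤ) • ((assoc w y x - assoc y w x) * z)) +
      ((1:ℤ) • ((assoc y w x - assoc y x w) * z)) +
      ((-1:ℤ) • ((assoc w y x - assoc w x y) * z)) +
      ((1:ℤ) • (assoc y z (w * x) - assoc y (w * x) z)) +
      ((-1:ℤ) • (assoc y (z * x) w - assoc (z * x) y w)) := by
    simp only [assoc, mul_sub, sub_mul, mul_add, add_mul]
    abel
  rw [show (assoc w (y * z) x - assoc w x (y * z)) = (0:A) from sub_eq_zero_of_eq (hr w (y * z) x)] at key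
  rw [show (assoc w (y * z) x - assoc (y * z) w x) = (0:A) from sub_eq_zero_of_eq (hl w (y * z) x)] at key
  rw [show (assoc w z y - assoc w y z) = (0:A) from sub_eq_zero_of_eq (hr w z y)] at key
  rw [show (assoc w (z * y) x - assoc w x (z * y)) = (0:A) from sub_eq_zero_of_eq (hr w (z * y) x)] at key
  rw [show (assoc y x (w * z) - assoc x y (w * z)) = (0:A) from sub_eq_zero_of_eq (hl y x (w * z))] at key
  rw [show (assoc w x y - assoc x w y) = (0:A) from sub_eq_zero_of_eq (hl w x y)] at key
  rw [show (assoc w y x - assoc y w x) = (0:A) from sub_eq_zero_of_eq (hl w y x)] at key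
  rw [show (assoc w z (x * y) - assoc w (x * y) z) = (0:A) from sub_eq_zero_of_eq (hr w z (x * y))] at key
  rw [show (assoc w (y * x) z - assoc (y * x) w z) = (0:A) from sub_eq_zero_of_eq (hl w (y * x) z)] at key
  rw [show (assoc w z (y * x) - assoc w (y * x) z) = (0:A) from sub_eq_zero_of_eq (hr w z (y * x))] at key
  rw [show (assoc w z (y * x) - assoc z w (y * x)) = (0:A) from sub_eq_zero_of_eq (hl w z (y * x))] at key
  rw [show (assoc z w x - assoc z x w) = (0:A) from sub_eq_zero_of_eq (hr z w x)] at key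
  rw [show (assoc z (w * y) x - assoc z x (w * y)) = (0:A) from sub_eq_zero_of_eq (hr z (w * y) x)] at key
  rw [show (assoc z y x - assoc y z x) = (0:A) from sub_eq_zero_of_eq (hl z y x)] at key
  rw [show (assoc w y (x * z) - assoc w (x * z) y) = (0:A) from sub_eq_zero_of_eq (hr w y (x * z))] at key
  rw [show (assoc w y (x * z) - assoc y w (x * z)) = (0:A) from sub_eq_zero_of_eq (hl w y (x * z))] at key
  rw [show (assoc w z x - assoc w x z) = (0:A) from sub_eq_zero_of_eq (hr w z x)] at key
  rw [show (assoc w (z * x) y - assoc (z * x) w y) = (0:A) from sub_eq_zero_of_eq (hl w (z * x) y)] at key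
  rw [show (assoc z w y - assoc z y w) = (0:A) from sub_eq_zero_of_eq (hr z w y)] at key
  rw [show (assoc z (y * w) x - assoc (y * w) z x) = (0:A) from sub_eq_zero_of_eq (hl z (y * w) x)] at key
  rw [show (assoc z (y * w) x - assoc z x (y * w)) = (0:A) from sub_eq_zero_of_eq (hr z (y * w) x)] at key
  rw [show (assoc z (w * x) y - assoc (w * x) z y) = (0:A) from sub_eq_zero_of_eq (hl z (w * x) y)] at key
  rw [show (assoc z x y - assoc x z y) = (0:A) from sub_eq_zero_of_eq (hl z x y)] at key
  rw [show (assoc (w * z) y x - assoc (w * z) x y) = (0:A) from sub_eq_zero_of_eq (hr (w * z) y x)] at key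
  rw [show (assoc z (y * x) w - assoc (y * x) z w) = (0:A) from sub_eq_zero_of_eq (hl z (y * x) w)] at key
  rw [show (assoc z w (y * x) - assoc z (y * x) w) = (0:A) from sub_eq_zero_of_eq (hr z w (y * x))] at key
  rw [show (assoc (z * w) y x - assoc (z * w) x y) = (0:A) from sub_eq_zero_of_eq (hr (z * w) y x)] at key
  rw [show (assoc w x z - assoc x w z) = (0:A) from sub_eq_zero_of_eq (hl w x z)] at key
  rw [show (assoc y z (x * w) - assoc y (x * w) z) = (0:A) from sub_eq_zero_of_eq (hr y z (x * w))] at key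
  rw [show (assoc z y (x * w) - assoc y z (x * w)) = (0:A) from sub_eq_zero_of_eq (hl z y (x * w))] at key
  rw [show (assoc z y (x * w) - assoc z (x * w) y) = (0:A) from sub_eq_zero_of_eq (hr z y (x * w))] at key
  rw [show (assoc y w x - assoc y x w) = (0:A) from sub_eq_zero_of_eq (hr y w x)] at key
  rw [show (assoc w y z - assoc y w z) = (0:A) from sub_eq_zero_of_eq (hl w y z)] at key
  rw [show (assoc y (w * z) x - assoc y x (w * z)) = (0:A) from sub_eq_zero_of_eq (hr y (w * z) x)] at key
  rw [show (assoc y w (z * x) - assoc y (z * x) w) = (0:A) from sub_eq_zero_of_eq (hr y w (z * x))] at key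
  rw [show (assoc y (z * w) x - assoc y x (z * w)) = (0:A) from sub_eq_zero_of_eq (hr y (z * w) x)] at key
  rw [show (assoc z x w - assoc x z w) = (0:A) from sub_eq_zero_of_eq (hl z x w)] at key
  rw [show (assoc y w (x * z) - assoc y (x * z) w) = (0:A) from sub_eq_zero_of_eq (hr y w (x * z))] at key
  rw [show (assoc y z x - assoc y x z) = (0:A) from sub_eq_zero_of_eq (hr y z x)] at key
  rw [show (assoc z y w - assoc y z w) = (0:A) from sub_eq_zero_of_eq (hl z y w)] at key
  rw [show (assoc y x w - assoc x y w) = (0:A) from sub_eq_zero_of_eq (hl y x w)] at key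
  rw [show (assoc z w (x * y) - assoc z (x * y) w) = (0:A) from sub_eq_zero_of_eq (hr z w (x * y))] at key
  rw [show (assoc z y x - assoc z x y) = (0:A) from sub_eq_zero_of_eq (hr z y x)] at key
  rw [show (assoc y x (z * w) - assoc x y (z * w)) = (0:A) from sub_eq_zero_of_eq (hl y x (z * w))] at key
  rw [show (assoc y (w * x) z - assoc (w * x) y z) = (0:A) from sub_eq_zero_of_eq (hl y (w * x) z)] at key
  rw [show (assoc y x z - assoc x y z) = (0:A) from sub_eq_zero_of_eq (hl y x z)] at key
  rw [show (assoc w y x - assoc w x y) = (0:A) from sub_eq_zero_of_eq (hr w y x)] at key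
  rw [show (assoc y z (w * x) - assoc y (w * x) z) = (0:A) from sub_eq_zero_of_eq (hr y z (w * x))] at key
  rw [show (assoc y (z * x) w - assoc (z * x) y w) = (0:A) from sub_eq_zero_of_eq (hl y (z * x) w)] at key
  simp only [mul_zero, zero_mul, smul_zero, add_zero, zero_add] at key
  have hd := int_smul_cancel (K:=K) h2 key
  rw [brk, assoc_sub₃, hd]

section Main
variable (hl : ∀ a b c : A, assoc a b c = assoc b a c)
    (hr : ∀ a b c : A, assoc a b c = assoc a c b)
    (h2 : (2:K) ≠ 0) (h3 : (3:K) ≠ 0)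

include hl hr h2

theorem CN2 (x y z w : A) : assoc x (brk z w) y = 0 := by
  rw [hr]; exact CN hl hr h2 x y z w

theorem CN1 (x y z w : A) : assoc (brk z w) x y = 0 := by
  rw [hl]; exact CN2 hl hr h2 x y z w

theorem R2 (x y z u v : A) : assoc x y z * brk u v = assoc x y (z * brk u v) := by
  have t := Teich x y z (brk u v)
  rw [CN hl hr h2 (x*y) z u v, CN hl hr h2 x (y*z) u v, CN hl hr h2 y z u v] at t
  simpa using t.symm

theorem R3 (x y z u v : A) : assoc (z * brk u v) x y = assoc z (brk u v * x) y := by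
  have t := Teich z (brk u v) x y
  rw [CN2 hl hr h2 z (x*y) u v, CN1 hl hr h2 x y u v, CN2 hl hr h2 z x u v] at t
  simpa [sub_eq_zero] using t

theorem R1 (x y z u v : A) : assoc (brk u v * x) z y = brk u v * assoc x z y := by
  have t := Teich (brk u v) x z y
  rw [CN1 hl hr h2 (x*z) y u v, CN1 hl hr h2 x (z*y) u v, CN1 hl hr h2 x z u v] at t
  simpa [sub_eq_zero] using t

theorem commAC (x y z u v : A) : brk u v * assoc x y z = assoc x y z * brk u v := by
  have h : assoc x y z * brk u v = brk u v * assoc x y z := calc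
    assoc x y z * brk u v = assoc x y (z * brk u v) := R2 hl hr h2 x y z u v
    _ = assoc x (z * brk u v) y := hr x y (z * brk u v)
    _ = assoc (z * brk u v) x y := hl x (z * brk u v) y
    _ = assoc z (brk u v * x) y := R3 hl hr h2 x y z u v
    _ = assoc (brk u v * x) z y := hl z (brk u v * x) y
    _ = brk u v * assoc x z y := R1 hl hr h2 x y z u v
    _ = brk u v * assoc x y z := by rw [hr x z y]
  exact h.symm

theorem Prule (x y p q : A) : assoc x y (p * q) = assoc x y (q * p) := by
  have h := CN hl hr h2 x y p q
  have h2' : assoc x y (p * q - q * p) = 0 := h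
  rw [assoc_sub₃, sub_eq_zero] at h2'
  exact h2'

theorem qstep (x y z u v : A) :
    assoc x y (z * (u * v)) = assoc x y (u * (v * z)) - assoc x y (assoc z u v) := by
  rw [Prule hl hr h2 x y z (u*v)]
  have e : (u * v) * z = u * (v * z) - assoc u v z := by simp only [assoc]; abel
  rw [e, assoc_sub₃]
  have inner : assoc u v z = assoc z u v := (hr u v z).trans (hl u z v)
  rw [inner]

theorem Gq (x y z u v : A) :
    assoc x y z * brk u v = assoc x y (z * (u * v)) - assoc x y (z * (v * u)) := by
  rw [R2 hl hr h2]
  have e : z * brk u v = z * (u * v) - z * (v * u) := by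
    simp only [brk, mul_sub]
  rw [e, assoc_sub₃]

include h3

theorem Qa (x y z u v : A) : assoc x y (assoc z u v) = 0 := by
  have e1 := qstep hl hr h2 x y z u v
  have e2 := qstep hl hr h2 x y u v z
  have e3 := qstep hl hr h2 x y v z u
  have innerA : assoc u v z = assoc z u v := (hr u v z).trans (hl u z v)
  have innerB : assoc v z u = assoc z u v := (hl v z u).trans (hr z v u)
  rw [innerA] at e2
  rw [innerB] at e3
  rw [e3] at e2
  rw [e2] at e1
  have key : (3:ℤ) • assoc x y (assoc z u v) =
      assoc x y (z * (u * v)) -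
        (assoc x y (z * (u * v)) - assoc x y (assoc z u v) - assoc x y (assoc z u v)
          - assoc x y (assoc z u v)) := by abel
  rw [← e1, sub_self] at key
  exact three_smul_cancel h3 key

theorem qcyc (x y z u v : A) : assoc x y (z * (u * v)) = assoc x y (u * (v * z)) := by
  have h := qstep hl hr h2 x y z u v
  rw [Qa hl hr h2 h3 x y z u v, sub_zero] at h
  exact h

theorem gcyc (x y z u v : A) : assoc x y z * brk u v = assoc x y v * brk z u := by
  rw [Gq hl hr h2 x y z u v, Gq hl hr h2 x y v z u,
      qcyc hl hr h2 h3 x y z u v, qcyc hl hr h2 h3 x y u v z, qcyc hl hr h2 h3 x y z v u]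

theorem swapd (x y c d e : A) : assoc x y c * brk d e = -(assoc x y d * brk c e) := calc
  assoc x y c * brk d e = assoc x y e * brk c d := gcyc hl hr h2 h3 x y c d e
  _ = -(assoc x y e * brk d c) := by rw [brk_anti c d, mul_neg]
  _ = -(assoc x y d * brk c e) := by rw [gcyc hl hr h2 h3 x y d c e]

theorem L1a (x y z u v : A) : assoc x y z * brk u v = 0 := by
  have chain : assoc x y z * brk u v = -(assoc x y z * brk u v) := calc
    assoc x y z * brk u v = -(assoc x y u * brk z v) := swapd hl hr h2 h3 x y z u v
    _ = -(assoc x u y * brk z v) := by rw [hr x y u]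
    _ = -(-(assoc x u z * brk y v)) := by rw [swapd hl hr h2 h3 x u y z v]
    _ = assoc x u z * brk y v := neg_neg _
    _ = assoc x z u * brk y v := by rw [hr x u z]
    _ = -(assoc x z y * brk u v) := swapd hl hr h2 h3 x z u y v
    _ = -(assoc x y z * brk u v) := by rw [hr x z y]
  have key : (2:ℤ) • (assoc x y z * brk u v) =
      assoc x y z * brk u v - -(assoc x y z * brk u v) := by abel
  rw [← chain, sub_self] at key
  exact int_smul_cancel h2 key

theorem L1b (x y z u v : A) : brk u v * assoc x y z = 0 := by
  rw [commAC hl hr h2]; exact L1a hl hr h2 h3 x y z u v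

end Main

theorem stmt7 (h2 : (2 : K) ≠ 0) (h3 : (3 : K) ≠ 0)
    (hl : ∀ a b c : A, assoc a b c = assoc b a c)
    (hr : ∀ a b c : A, assoc a b c = assoc a c b)
    (a b c : A) :
    jmul (brk (assoc a b b) a) (brk (brk a b) c) = 0 := by
  have f1 : assoc a b b * brk (brk a b) c = 0 := L1a hl hr h2 h3 a b b (brk a b) c
  have f2 : brk (brk a b) c * assoc a b b = 0 := L1b hl hr h2 h3 a b b (brk a b) c
  have f3 : assoc a b b * (a * brk (brk a b) c) = assoc a b b * (brk (brk a b) c * a) := by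
    have h := L1a hl hr h2 h3 a b b a (brk (brk a b) c)
    have h' : assoc a b b * (a * brk (brk a b) c - brk (brk a b) c * a) = 0 := h
    rw [mul_sub, sub_eq_zero] at h'
    exact h'
  have f4 : brk (brk a b) c * a * assoc a b b = a * brk (brk a b) c * assoc a b b := by
    have h := L1b hl hr h2 h3 a b b (brk (brk a b) c) a
    have h' : (brk (brk a b) c * a - a * brk (brk a b) c) * assoc a b b = 0 := h
    rw [sub_mul, sub_eq_zero] at h'
    exact h'
  -- nuclearity instances for Y = brk (brk a b) c
  have n1 : assoc a b b * (a * brk (brk a b) c) - assoc a b b * a * brk (brk a b) c = 0 :=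
    CN hl hr h2 (assoc a b b) a (brk a b) c
  have n2 : a * (assoc a b b * brk (brk a b) c) - a * assoc a b b * brk (brk a b) c = 0 :=
    CN hl hr h2 a (assoc a b b) (brk a b) c
  have n3 : brk (brk a b) c * (assoc a b b * a) - brk (brk a b) c * assoc a b b * a = 0 :=
    CN1 hl hr h2 (assoc a b b) a (brk a b) c
  have n4 : assoc a b b * (brk (brk a b) c * a) - assoc a b b * brk (brk a b) c * a = 0 :=
    CN2 hl hr h2 (assoc a b b) a (brk a b) c
  have n5 : brk (brk a b) c * (a * assoc a b b) - brk (brk a b) c * a * assoc a b b = 0 :=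
    CN1 hl hr h2 a (assoc a b b) (brk a b) c
  have n6 : a * (brk (brk a b) c * assoc a b b) - a * brk (brk a b) c * assoc a b b = 0 :=
    CN2 hl hr h2 a (assoc a b b) (brk a b) c
  have hA : assoc a b b * a * brk (brk a b) c = 0 := by
    rw [sub_eq_zero] at n1 n4
    rw [← n1, f3, n4, f1, zero_mul]
  have hB : a * assoc a b b * brk (brk a b) c = 0 := by
    rw [sub_eq_zero] at n2
    rw [← n2, f1, mul_zero]
  have hC : brk (brk a b) c * (assoc a b b * a) = 0 := by
    rw [sub_eq_zero] at n3
    rw [n3, f2, zero_mul]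
  have hD : brk (brk a b) c * (a * assoc a b b) = 0 := by
    rw [sub_eq_zero] at n5 n6
    rw [n5, f4, ← n6, f2, mul_zero]
  rw [jmul, brk]
  rw [sub_mul, mul_sub, hA, hB, hC, hD]
  abel
end

section
/- Let A be an assosymmetric algebra over a field of characteristic ≠ 2. Then the plus-algebra A^(+) = (A, ⋆) with x⋆y = xy + yx is a Lie triple algebra: it is commutative and satisfies ⟨a, b⋆b, c⟩ = 2 b ⋆ ⟨a,b,c⟩ for all a, b, c ∈ A, where ⟨x,y,z⟩ = x⋆(y⋆z) - (x⋆y)⋆z. -/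
variable {K A : Type*} [Field K] [NonUnitalNonAssocRing A] [Module K A]
  [IsScalarTower K A A] [SMulCommClass K A A]

theorem stmt8 (h2 : (2 : K) ≠ 0)
    (hl : ∀ a b c : A, assoc a b c = assoc b a c)
    (hr : ∀ a b c : A, assoc a b c = assoc a c b) :
    (∀ a b : A, jmul a b = jmul b a) ∧
      (∀ a b c : A, jassoc a (jmul b b) c = 2 • jmul b (jassoc a b c)) := by
  constructor
  · intro a b
    simp only [jmul]; abel
  · intro a b c
    have key : jassoc a (jmul b b) c - 2 • jmul b (jassoc a b c) =
        (1 : ℤ) • (assoc a b (b*c) - assoc b a (b*c)) +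
        (1 : ℤ) • (assoc a b (b*c) - assoc a (b*c) b) +
        (-3 : ℤ) • (assoc a b (c*b) - assoc b a (c*b)) +
        (1 : ℤ) • (assoc a b (c*b) - assoc a (c*b) b) +
        (7 : ℤ) • (assoc a c (b*b) - assoc c a (b*b)) +
        (-5 : ℤ) • (assoc a c (b*b) - assoc a (b*b) c) +
        (-5 : ℤ) • (assoc a (b*b) c - assoc (b*b) a c) +
        (3 : ℤ) • (assoc a (b*c) b - assoc (b*c) a b) +
        (1 : ℤ) • (assoc a (c*b) b - assoc (c*b) a b) +
        (-4 : ℤ) • (assoc b a (b*c) - assoc b (b*c) a) +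
        (2 : ℤ) • (assoc b a (c*b) - assoc b (c*b) a) +
        (5 : ℤ) • (assoc b b (a*c) - assoc b (a*c) b) +
        (-4 : ℤ) • (assoc b b (c*a) - assoc b (c*a) b) +
        (4 : ℤ) • (assoc b c (a*b) - assoc c b (a*b)) +
        (-7 : ℤ) • (assoc b c (a*b) - assoc b (a*b) c) +
        (-6 : ℤ) • (assoc b c (b*a) - assoc c b (b*a)) +
        (8 : ℤ) • (assoc b c (b*a) - assoc b (b*a) c) +
        (-2 : ℤ) • (assoc b (a*b) c - assoc (a*b) b c) +
        (-2 : ℤ) • (assoc b (a*c) b - assoc (a*c) b b) +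
        (5 : ℤ) • (assoc b (b*a) c - assoc (b*a) b c) +
        (-2 : ℤ) • (assoc b (b*c) a - assoc (b*c) b a) +
        (1 : ℤ) • (assoc b (c*a) b - assoc (c*a) b b) +
        (6 : ℤ) • (assoc c a (b*b) - assoc c (b*b) a) +
        (3 : ℤ) • (assoc c b (a*b) - assoc c (a*b) b) +
        (-6 : ℤ) • (assoc c b (b*a) - assoc c (b*a) b) +
        (2 : ℤ) • (assoc c (a*b) b - assoc (a*b) c b) +
        (-5 : ℤ) • (assoc c (b*a) b - assoc (b*a) c b) +
        (4 : ℤ) • (assoc c (b*b) a - assoc (b*b) c a) +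
        (-1 : ℤ) • (c * (assoc a b b - assoc b a b)) +
        (-2 : ℤ) • ((assoc a b b - assoc b a b) * c) +
        (1 : ℤ) • (b * (assoc a b c - assoc b a c)) +
        (2 : ℤ) • (b * (assoc a b c - assoc a c b)) +
        (-1 : ℤ) • ((assoc a b c - assoc b a c) * b) +
        (1 : ℤ) • ((assoc a b c - assoc a c b) * b) +
        (-5 : ℤ) • (b * (assoc a c b - assoc c a b)) +
        (-1 : ℤ) • ((assoc a c b - assoc c a b) * b) +
        (3 : ℤ) • ((assoc b a b - assoc b b a) * c) +
        (-4 : ℤ) • (b * (assoc b a c - assoc b c a)) +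
        (-8 : ℤ) • ((assoc b a c - assoc b c a) * b) +
        (-2 : ℤ) • (a * (assoc b b c - assoc b c b)) +
        (2 : ℤ) • ((assoc b b c - assoc b c b) * a) +
        (-3 : ℤ) • ((assoc b c a - assoc c b a) * b) := by
      simp only [jassoc, jmul, assoc, mul_add, add_mul, mul_sub, sub_mul, smul_add, smul_sub]
      abel
    have z1 : (assoc a b (b*c) - assoc b a (b*c)) = 0 := sub_eq_zero_of_eq (hl a b (b*c))
    have z2 : (assoc a b (b*c) - assoc a (b*c) b) = 0 := sub_eq_zero_of_eq (hr a b (b*c))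
    have z3 : (assoc a b (c*b) - assoc b a (c*b)) = 0 := sub_eq_zero_of_eq (hl a b (c*b))
    have z4 : (assoc a b (c*b) - assoc a (c*b) b) = 0 := sub_eq_zero_of_eq (hr a b (c*b))
    have z5 : (assoc a c (b*b) - assoc c a (b*b)) = 0 := sub_eq_zero_of_eq (hl a c (b*b))
    have z6 : (assoc a c (b*b) - assoc a (b*b) c) = 0 := sub_eq_zero_of_eq (hr a c (b*b))
    have z7 : (assoc a (b*b) c - assoc (b*b) a c) = 0 := sub_eq_zero_of_eq (hl a (b*b) c)
    have z8 : (assoc a (b*c) b - assoc (b*c) a b) = 0 := sub_eq_zero_of_eq (hl a (b*c) b)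
    have z9 : (assoc a (c*b) b - assoc (c*b) a b) = 0 := sub_eq_zero_of_eq (hl a (c*b) b)
    have z10 : (assoc b a (b*c) - assoc b (b*c) a) = 0 := sub_eq_zero_of_eq (hr b a (b*c))
    have z11 : (assoc b a (c*b) - assoc b (c*b) a) = 0 := sub_eq_zero_of_eq (hr b a (c*b))
    have z12 : (assoc b b (a*c) - assoc b (a*c) b) = 0 := sub_eq_zero_of_eq (hr b b (a*c))
    have z13 : (assoc b b (c*a) - assoc b (c*a) b) = 0 := sub_eq_zero_of_eq (hr b b (c*a))
    have z14 : (assoc b c (a*b) - assoc c b (a*b)) = 0 := sub_eq_zero_of_eq (hl b c (a*b))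
    have z15 : (assoc b c (a*b) - assoc b (a*b) c) = 0 := sub_eq_zero_of_eq (hr b c (a*b))
    have z16 : (assoc b c (b*a) - assoc c b (b*a)) = 0 := sub_eq_zero_of_eq (hl b c (b*a))
    have z17 : (assoc b c (b*a) - assoc b (b*a) c) = 0 := sub_eq_zero_of_eq (hr b c (b*a))
    have z18 : (assoc b (a*b) c - assoc (a*b) b c) = 0 := sub_eq_zero_of_eq (hl b (a*b) c)
    have z19 : (assoc b (a*c) b - assoc (a*c) b b) = 0 := sub_eq_zero_of_eq (hl b (a*c) b)
    have z20 : (assoc b (b*a) c - assoc (b*a) b c) = 0 := sub_eq_zero_of_eq (hl b (b*a) c)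
    have z21 : (assoc b (b*c) a - assoc (b*c) b a) = 0 := sub_eq_zero_of_eq (hl b (b*c) a)
    have z22 : (assoc b (c*a) b - assoc (c*a) b b) = 0 := sub_eq_zero_of_eq (hl b (c*a) b)
    have z23 : (assoc c a (b*b) - assoc c (b*b) a) = 0 := sub_eq_zero_of_eq (hr c a (b*b))
    have z24 : (assoc c b (a*b) - assoc c (a*b) b) = 0 := sub_eq_zero_of_eq (hr c b (a*b))
    have z25 : (assoc c b (b*a) - assoc c (b*a) b) = 0 := sub_eq_zero_of_eq (hr c b (b*a))
    have z26 : (assoc c (a*b) b - assoc (a*b) c b) = 0 := sub_eq_zero_of_eq (hl c (a*b) b)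
    have z27 : (assoc c (b*a) b - assoc (b*a) c b) = 0 := sub_eq_zero_of_eq (hl c (b*a) b)
    have z28 : (assoc c (b*b) a - assoc (b*b) c a) = 0 := sub_eq_zero_of_eq (hl c (b*b) a)
    have z29 : (assoc a b b - assoc b a b) = 0 := sub_eq_zero_of_eq (hl a b b)
    have z30 : (assoc a b b - assoc b a b) = 0 := sub_eq_zero_of_eq (hl a b b)
    have z31 : (assoc a b c - assoc b a c) = 0 := sub_eq_zero_of_eq (hl a b c)
    have z32 : (assoc a b c - assoc a c b) = 0 := sub_eq_zero_of_eq (hr a b c)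
    have z33 : (assoc a b c - assoc b a c) = 0 := sub_eq_zero_of_eq (hl a b c)
    have z34 : (assoc a b c - assoc a c b) = 0 := sub_eq_zero_of_eq (hr a b c)
    have z35 : (assoc a c b - assoc c a b) = 0 := sub_eq_zero_of_eq (hl a c b)
    have z36 : (assoc a c b - assoc c a b) = 0 := sub_eq_zero_of_eq (hl a c b)
    have z37 : (assoc b a b - assoc b b a) = 0 := sub_eq_zero_of_eq (hr b a b)
    have z38 : (assoc b a c - assoc b c a) = 0 := sub_eq_zero_of_eq (hr b a c)
    have z39 : (assoc b a c - assoc b c a) = 0 := sub_eq_zero_of_eq (hr b a c)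
    have z40 : (assoc b b c - assoc b c b) = 0 := sub_eq_zero_of_eq (hr b b c)
    have z41 : (assoc b b c - assoc b c b) = 0 := sub_eq_zero_of_eq (hr b b c)
    have z42 : (assoc b c a - assoc c b a) = 0 := sub_eq_zero_of_eq (hl b c a)
    simp only [z1, z2, z3, z4, z5, z6, z7, z8, z9, z10, z11, z12, z13, z14, z15, z16, z17, z18, z19, z20, z21, z22, z23, z24, z25, z26, z27, z28, z29, z30, z31, z32, z33, z34, z35, z36, z37, z38, z39, z40, z41, z42, smul_zero, mul_zero, zero_mul, add_zero, zero_add] at key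
    exact sub_eq_zero.mp key
end

section
/- Let A be an assosymmetric algebra over a field of characteristic ≠ 2, 3. Then for all a, b, c, d in A: ⟨b,a,c⋆d⟩ + ⟨c,a,d⋆b⟩ + ⟨d,a,b⋆c⟩ = -6[a,(b,c,d)], where ⋆ is the Jordan product, ⟨·,·,·⟩ its associator, [·,·] the commutator, and (·,·,·) the associator of the original product. -/
variable {K A : Type*} [Field K] [NonUnitalNonAssocRing A] [Module K A]
  [IsScalarTower K A A] [SMulCommClass K A A]

theorem stmt9 (h2 : (2 : K) ≠ 0) (h3 : (3 : K) ≠ 0)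
    (hl : ∀ a b c : A, assoc a b c = assoc b a c)
    (hr : ∀ a b c : A, assoc a b c = assoc a c b)
    (a b c d : A) :
    jassoc b a (jmul c d) + jassoc c a (jmul d b) + jassoc d a (jmul b c)
      = -(6 • brk a (assoc b c d)) := by
  have z1 : assoc a (b * c) d - assoc (b * c) a d = (0:A) := sub_eq_zero.mpr (hl a (b * c) d)
  have z2 : assoc a (b * c) d - assoc a d (b * c) = (0:A) := sub_eq_zero.mpr (hr a (b * c) d)
  have z3 : assoc a (c * b) d - assoc (c * b) a d = (0:A) := sub_eq_zero.mpr (hl a (c * b) d)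
  have z4 : assoc a (c * b) d - assoc a d (c * b) = (0:A) := sub_eq_zero.mpr (hr a (c * b) d)
  have z5 : assoc a b (c * d) - assoc b a (c * d) = (0:A) := sub_eq_zero.mpr (hl a b (c * d))
  have z6 : assoc a b (c * d) - assoc a (c * d) b = (0:A) := sub_eq_zero.mpr (hr a b (c * d))
  have z7 : assoc a b (d * c) - assoc b a (d * c) = (0:A) := sub_eq_zero.mpr (hl a b (d * c))
  have z8 : assoc a b (d * c) - assoc a (d * c) b = (0:A) := sub_eq_zero.mpr (hr a b (d * c))
  have z9 : assoc a (b * d) c - assoc (b * d) a c = (0:A) := sub_eq_zero.mpr (hl a (b * d) c)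
  have z10 : assoc a (b * d) c - assoc a c (b * d) = (0:A) := sub_eq_zero.mpr (hr a (b * d) c)
  have z11 : assoc a (d * b) c - assoc (d * b) a c = (0:A) := sub_eq_zero.mpr (hl a (d * b) c)
  have z12 : assoc a (d * b) c - assoc a c (d * b) = (0:A) := sub_eq_zero.mpr (hr a (d * b) c)
  have z13 : assoc a c (b * d) - assoc c a (b * d) = (0:A) := sub_eq_zero.mpr (hl a c (b * d))
  have z14 : assoc a c (d * b) - assoc c a (d * b) = (0:A) := sub_eq_zero.mpr (hl a c (d * b))
  have z15 : assoc a (c * d) b - assoc (c * d) a b = (0:A) := sub_eq_zero.mpr (hl a (c * d) b)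
  have z16 : assoc a (d * c) b - assoc (d * c) a b = (0:A) := sub_eq_zero.mpr (hl a (d * c) b)
  have z17 : assoc a d (b * c) - assoc d a (b * c) = (0:A) := sub_eq_zero.mpr (hl a d (b * c))
  have z18 : assoc a d (c * b) - assoc d a (c * b) = (0:A) := sub_eq_zero.mpr (hl a d (c * b))
  have z19 : assoc (b * c) d a - assoc d (b * c) a = (0:A) := sub_eq_zero.mpr (hl (b * c) d a)
  have z20 : assoc (c * b) d a - assoc d (c * b) a = (0:A) := sub_eq_zero.mpr (hl (c * b) d a)
  have z21 : assoc b (c * d) a - assoc (c * d) b a = (0:A) := sub_eq_zero.mpr (hl b (c * d) a)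
  have z22 : assoc b (d * c) a - assoc (d * c) b a = (0:A) := sub_eq_zero.mpr (hl b (d * c) a)
  have z23 : assoc (b * d) c a - assoc c (b * d) a = (0:A) := sub_eq_zero.mpr (hl (b * d) c a)
  have z24 : assoc (d * b) c a - assoc c (d * b) a = (0:A) := sub_eq_zero.mpr (hl (d * b) c a)
  have z25 : a * (assoc b c d) - a * (assoc c b d) = (0:A) := by rw [hl b c d]; exact sub_self _
  have z26 : (assoc b c d) * a - (assoc c b d) * a = (0:A) := by rw [hl b c d]; exact sub_self _
  have z27 : a * (assoc b c d) - a * (assoc b d c) = (0:A) := by rw [hr b c d]; exact sub_self _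
  have z28 : (assoc b c d) * a - (assoc b d c) * a = (0:A) := by rw [hr b c d]; exact sub_self _
  have z29 : a * (assoc b d c) - a * (assoc d b c) = (0:A) := by rw [hl b d c]; exact sub_self _
  have z30 : (assoc b d c) * a - (assoc d b c) * a = (0:A) := by rw [hl b d c]; exact sub_self _
  have z31 : a * (assoc c b d) - a * (assoc c d b) = (0:A) := by rw [hr c b d]; exact sub_self _
  have z32 : (assoc c b d) * a - (assoc c d b) * a = (0:A) := by rw [hr c b d]; exact sub_self _
  have z33 : a * (assoc c d b) - a * (assoc d c b) = (0:A) := by rw [hl c d b]; exact sub_self _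
  have z34 : (assoc c d b) * a - (assoc d c b) * a = (0:A) := by rw [hl c d b]; exact sub_self _
  have key : jassoc b a (jmul c d) + jassoc c a (jmul d b) + jassoc d a (jmul b c)
      - (-(6 • brk a (assoc b c d)))
      = (1 : ℤ) • (assoc a (b * c) d - assoc (b * c) a d) +
      (-2 : ℤ) • (assoc a (b * c) d - assoc a d (b * c)) +
      (1 : ℤ) • (assoc a (c * b) d - assoc (c * b) a d) +
      (-2 : ℤ) • (assoc a (c * b) d - assoc a d (c * b)) +
      (-1 : ℤ) • (assoc a b (c * d) - assoc b a (c * d)) +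
      (2 : ℤ) • (assoc a b (c * d) - assoc a (c * d) b) +
      (-1 : ℤ) • (assoc a b (d * c) - assoc b a (d * c)) +
      (2 : ℤ) • (assoc a b (d * c) - assoc a (d * c) b) +
      (1 : ℤ) • (assoc a (b * d) c - assoc (b * d) a c) +
      (-2 : ℤ) • (assoc a (b * d) c - assoc a c (b * d)) +
      (1 : ℤ) • (assoc a (d * b) c - assoc (d * b) a c) +
      (-2 : ℤ) • (assoc a (d * b) c - assoc a c (d * b)) +
      (-1 : ℤ) • (assoc a c (b * d) - assoc c a (b * d)) +
      (-1 : ℤ) • (assoc a c (d * b) - assoc c a (d * b)) +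
      (1 : ℤ) • (assoc a (c * d) b - assoc (c * d) a b) +
      (1 : ℤ) • (assoc a (d * c) b - assoc (d * c) a b) +
      (-1 : ℤ) • (assoc a d (b * c) - assoc d a (b * c)) +
      (-1 : ℤ) • (assoc a d (c * b) - assoc d a (c * b)) +
      (-1 : ℤ) • (assoc (b * c) d a - assoc d (b * c) a) +
      (-1 : ℤ) • (assoc (c * b) d a - assoc d (c * b) a) +
      (1 : ℤ) • (assoc b (c * d) a - assoc (c * d) b a) +
      (1 : ℤ) • (assoc b (d * c) a - assoc (d * c) b a) +
      (-1 : ℤ) • (assoc (b * d) c a - assoc c (b * d) a) +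
      (-1 : ℤ) • (assoc (d * b) c a - assoc c (d * b) a) +
      (3 : ℤ) • (a * (assoc b c d) - a * (assoc c b d)) +
      (-3 : ℤ) • ((assoc b c d) * a - (assoc c b d) * a) +
      (2 : ℤ) • (a * (assoc b c d) - a * (assoc b d c)) +
      (-2 : ℤ) • ((assoc b c d) * a - (assoc b d c) * a) +
      (1 : ℤ) • (a * (assoc b d c) - a * (assoc d b c)) +
      (-1 : ℤ) • ((assoc b d c) * a - (assoc d b c) * a) +
      (2 : ℤ) • (a * (assoc c b d) - a * (assoc c d b)) +
      (-2 : ℤ) • ((assoc c b d) * a - (assoc c d b) * a) +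
      (1 : ℤ) • (a * (assoc c d b) - a * (assoc d c b)) +
      (-1 : ℤ) • ((assoc c d b) * a - (assoc d c b) * a) := by
    simp only [assoc, brk, jmul, jassoc, mul_add, add_mul, mul_sub, sub_mul]
    abel
  rw [z1, z2, z3, z4, z5, z6, z7, z8, z9, z10, z11, z12, z13, z14, z15, z16, z17, z18, z19, z20, z21, z22, z23, z24, z25, z26, z27, z28, z29, z30, z31, z32, z33, z34] at key
  simp only [smul_zero, add_zero, zero_add] at key
  exact sub_eq_zero.mp key
end

section
/- Let A be an assosymmetric algebra over a field of characteristic ≠ 2, 3. The multilinear map wjor(a,b,c,d) = ⟨b,a,c⋆d⟩ + ⟨c,a,d⋆b⟩ + ⟨d,a,b⋆c⟩ (computed in the Jordan algebra A^(+)) is fully symmetric in its four arguments. -/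
variable {K A : Type*} [Field K] [NonUnitalNonAssocRing A] [Module K A]
  [IsScalarTower K A A] [SMulCommClass K A A]

/-- multilinear Jordan polynomial -/
def wjor (a b c d : A) : A :=
  jassoc b a (jmul c d) + jassoc c a (jmul d b) + jassoc d a (jmul b c)


lemma jmul_comm (a b : A) : jmul a b = jmul b a := by simp [jmul]; exact add_comm _ _

lemma wjor_rot (a b c d : A) : wjor a c d b = wjor a b c d := by
  unfold wjor; rw [jmul_comm d b, jmul_comm b c, jmul_comm c d]; abel

lemma wjor_swap23 (a b c d : A) : wjor a b d c = wjor a b c d := by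
  unfold wjor; rw [jmul_comm d c, jmul_comm c b, jmul_comm b d]; abel

lemma swap01 (hl : ∀ a b c : A, assoc a b c = assoc b a c)
    (hr : ∀ a b c : A, assoc a b c = assoc a c b)
    (a b c d : A) : wjor a b c d = wjor b a c d := by
  have z0 : (assoc (a*b) c d - assoc c (a*b) d) = (0:A) := sub_eq_zero_of_eq (hl (a*b) c d)
  have z1 : (assoc (a*c) b d - assoc b (a*c) d) = (0:A) := sub_eq_zero_of_eq (hl (a*c) b d)
  have z2 : (assoc b d (a*c) - assoc d b (a*c)) = (0:A) := sub_eq_zero_of_eq (hl b d (a*c))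
  have z3 : (assoc (a*c) d b - assoc d (a*c) b) = (0:A) := sub_eq_zero_of_eq (hl (a*c) d b)
  have z4 : (assoc (a*d) b c - assoc b (a*d) c) = (0:A) := sub_eq_zero_of_eq (hl (a*d) b c)
  have z5 : (assoc b c (a*d) - assoc c b (a*d)) = (0:A) := sub_eq_zero_of_eq (hl b c (a*d))
  have z6 : (assoc c (a*d) b - assoc (a*d) c b) = (0:A) := sub_eq_zero_of_eq (hl c (a*d) b)
  have z7 : (assoc c (b*a) d - assoc (b*a) c d) = (0:A) := sub_eq_zero_of_eq (hl c (b*a) d)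
  have z8 : (assoc (b*c) a d - assoc a (b*c) d) = (0:A) := sub_eq_zero_of_eq (hl (b*c) a d)
  have z9 : (assoc a d (b*c) - assoc d a (b*c)) = (0:A) := sub_eq_zero_of_eq (hl a d (b*c))
  have z10 : (assoc d (b*c) a - assoc (b*c) d a) = (0:A) := sub_eq_zero_of_eq (hl d (b*c) a)
  have z11 : (assoc (b*d) a c - assoc a (b*d) c) = (0:A) := sub_eq_zero_of_eq (hl (b*d) a c)
  have z12 : (assoc a c (b*d) - assoc c a (b*d)) = (0:A) := sub_eq_zero_of_eq (hl a c (b*d))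
  have z13 : (assoc (b*d) c a - assoc c (b*d) a) = (0:A) := sub_eq_zero_of_eq (hl (b*d) c a)
  have z14 : (assoc (c*a) b d - assoc b (c*a) d) = (0:A) := sub_eq_zero_of_eq (hl (c*a) b d)
  have z15 : (assoc b d (c*a) - assoc d b (c*a)) = (0:A) := sub_eq_zero_of_eq (hl b d (c*a))
  have z16 : (assoc (c*a) d b - assoc d (c*a) b) = (0:A) := sub_eq_zero_of_eq (hl (c*a) d b)
  have z17 : (assoc (c*b) a d - assoc a (c*b) d) = (0:A) := sub_eq_zero_of_eq (hl (c*b) a d)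
  have z18 : (assoc a d (c*b) - assoc d a (c*b)) = (0:A) := sub_eq_zero_of_eq (hl a d (c*b))
  have z19 : (assoc (c*b) d a - assoc d (c*b) a) = (0:A) := sub_eq_zero_of_eq (hl (c*b) d a)
  have z20 : (assoc (c*d) a b - assoc a (c*d) b) = (0:A) := sub_eq_zero_of_eq (hl (c*d) a b)
  have z21 : (assoc a b (c*d) - assoc b a (c*d)) = (0:A) := sub_eq_zero_of_eq (hl a b (c*d))
  have z22 : (assoc (c*d) b a - assoc b (c*d) a) = (0:A) := sub_eq_zero_of_eq (hl (c*d) b a)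
  have z23 : (assoc (d*a) b c - assoc b (d*a) c) = (0:A) := sub_eq_zero_of_eq (hl (d*a) b c)
  have z24 : (assoc b c (d*a) - assoc c b (d*a)) = (0:A) := sub_eq_zero_of_eq (hl b c (d*a))
  have z25 : (assoc (d*a) c b - assoc c (d*a) b) = (0:A) := sub_eq_zero_of_eq (hl (d*a) c b)
  have z26 : (assoc (d*b) a c - assoc a (d*b) c) = (0:A) := sub_eq_zero_of_eq (hl (d*b) a c)
  have z27 : (assoc a c (d*b) - assoc c a (d*b)) = (0:A) := sub_eq_zero_of_eq (hl a c (d*b))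
  have z28 : (assoc (d*b) c a - assoc c (d*b) a) = (0:A) := sub_eq_zero_of_eq (hl (d*b) c a)
  have z29 : (assoc (d*c) a b - assoc a (d*c) b) = (0:A) := sub_eq_zero_of_eq (hl (d*c) a b)
  have z30 : (assoc (d*c) b a - assoc b (d*c) a) = (0:A) := sub_eq_zero_of_eq (hl (d*c) b a)
  have z31 : (a * assoc b d c - a * assoc d b c) = (0:A) := sub_eq_zero_of_eq (by rw [hl b d c])
  have z32 : (assoc b d c * a - assoc d b c * a) = (0:A) := sub_eq_zero_of_eq (by rw [hl b d c])
  have z33 : (a * assoc c d b - a * assoc d c b) = (0:A) := sub_eq_zero_of_eq (by rw [hl c d b])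
  have z34 : (assoc d c b * a - assoc c d b * a) = (0:A) := sub_eq_zero_of_eq (by rw [hl d c b])
  have z35 : (b * assoc a d c - b * assoc d a c) = (0:A) := sub_eq_zero_of_eq (by rw [hl a d c])
  have z36 : (assoc a d c * b - assoc d a c * b) = (0:A) := sub_eq_zero_of_eq (by rw [hl a d c])
  have z37 : (b * assoc c d a - b * assoc d c a) = (0:A) := sub_eq_zero_of_eq (by rw [hl c d a])
  have z38 : (assoc c d a * b - assoc d c a * b) = (0:A) := sub_eq_zero_of_eq (by rw [hl c d a])
  have z39 : (c * assoc a b d - c * assoc b a d) = (0:A) := sub_eq_zero_of_eq (by rw [hl a b d])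
  have z40 : (c * assoc a d b - c * assoc d a b) = (0:A) := sub_eq_zero_of_eq (by rw [hl a d b])
  have z41 : (c * assoc b d a - c * assoc d b a) = (0:A) := sub_eq_zero_of_eq (by rw [hl b d a])
  have z42 : (assoc a b c * d - assoc b a c * d) = (0:A) := sub_eq_zero_of_eq (by rw [hl a b c])
  have z43 : (assoc c (a*b) d - assoc c d (a*b)) = (0:A) := sub_eq_zero_of_eq (hr c (a*b) d)
  have z44 : (assoc (a*c) b d - assoc (a*c) d b) = (0:A) := sub_eq_zero_of_eq (hr (a*c) b d)
  have z45 : (assoc b (a*c) d - assoc b d (a*c)) = (0:A) := sub_eq_zero_of_eq (hr b (a*c) d)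
  have z46 : (assoc b (a*d) c - assoc b c (a*d)) = (0:A) := sub_eq_zero_of_eq (hr b (a*d) c)
  have z47 : (assoc c (b*a) d - assoc c d (b*a)) = (0:A) := sub_eq_zero_of_eq (hr c (b*a) d)
  have z48 : (assoc (b*c) a d - assoc (b*c) d a) = (0:A) := sub_eq_zero_of_eq (hr (b*c) a d)
  have z49 : (assoc a (b*c) d - assoc a d (b*c)) = (0:A) := sub_eq_zero_of_eq (hr a (b*c) d)
  have z50 : (assoc a (b*d) c - assoc a c (b*d)) = (0:A) := sub_eq_zero_of_eq (hr a (b*d) c)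
  have z51 : (assoc (c*a) b d - assoc (c*a) d b) = (0:A) := sub_eq_zero_of_eq (hr (c*a) b d)
  have z52 : (assoc b (c*a) d - assoc b d (c*a)) = (0:A) := sub_eq_zero_of_eq (hr b (c*a) d)
  have z53 : (assoc (c*b) a d - assoc (c*b) d a) = (0:A) := sub_eq_zero_of_eq (hr (c*b) a d)
  have z54 : (assoc a (c*b) d - assoc a d (c*b)) = (0:A) := sub_eq_zero_of_eq (hr a (c*b) d)
  have z55 : (assoc (c*d) a b - assoc (c*d) b a) = (0:A) := sub_eq_zero_of_eq (hr (c*d) a b)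
  have z56 : (assoc (d*a) b c - assoc (d*a) c b) = (0:A) := sub_eq_zero_of_eq (hr (d*a) b c)
  have z57 : (assoc b (d*a) c - assoc b c (d*a)) = (0:A) := sub_eq_zero_of_eq (hr b (d*a) c)
  have z58 : (assoc (d*b) a c - assoc (d*b) c a) = (0:A) := sub_eq_zero_of_eq (hr (d*b) a c)
  have z59 : (assoc a (d*b) c - assoc a c (d*b)) = (0:A) := sub_eq_zero_of_eq (hr a (d*b) c)
  have z60 : (assoc (d*c) a b - assoc (d*c) b a) = (0:A) := sub_eq_zero_of_eq (hr (d*c) a b)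
  have z61 : (a * assoc b c d - a * assoc b d c) = (0:A) := sub_eq_zero_of_eq (by rw [hr b c d])
  have z62 : (assoc b c d * a - assoc b d c * a) = (0:A) := sub_eq_zero_of_eq (by rw [hr b c d])
  have z63 : (a * assoc c b d - a * assoc c d b) = (0:A) := sub_eq_zero_of_eq (by rw [hr c b d])
  have z64 : (assoc c b d * a - assoc c d b * a) = (0:A) := sub_eq_zero_of_eq (by rw [hr c b d])
  have z65 : (b * assoc a c d - b * assoc a d c) = (0:A) := sub_eq_zero_of_eq (by rw [hr a c d])
  have z66 : (assoc a c d * b - assoc a d c * b) = (0:A) := sub_eq_zero_of_eq (by rw [hr a c d])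
  have z67 : (b * assoc c a d - b * assoc c d a) = (0:A) := sub_eq_zero_of_eq (by rw [hr c a d])
  have z68 : (assoc c a d * b - assoc c d a * b) = (0:A) := sub_eq_zero_of_eq (by rw [hr c a d])
  have z69 : (c * assoc a b d - c * assoc a d b) = (0:A) := sub_eq_zero_of_eq (by rw [hr a b d])
  have z70 : (c * assoc b a d - c * assoc b d a) = (0:A) := sub_eq_zero_of_eq (by rw [hr b a d])
  have e : wjor a b c d - wjor b a c d =
      (-3 : ℤ) • (assoc (a*b) c d - assoc c (a*b) d) +
      (4 : ℤ) • (assoc (a*c) b d - assoc b (a*c) d) +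
      (1 : ℤ) • (assoc b d (a*c) - assoc d b (a*c)) +
      (1 : ℤ) • (assoc (a*c) d b - assoc d (a*c) b) +
      (1 : ℤ) • (assoc (a*d) b c - assoc b (a*d) c) +
      (1 : ℤ) • (assoc b c (a*d) - assoc c b (a*d)) +
      (5 : ℤ) • (assoc c (a*d) b - assoc (a*d) c b) +
      (-3 : ℤ) • (assoc c (b*a) d - assoc (b*a) c d) +
      (-4 : ℤ) • (assoc (b*c) a d - assoc a (b*c) d) +
      (-1 : ℤ) • (assoc a d (b*c) - assoc d a (b*c)) +
      (1 : ℤ) • (assoc d (b*c) a - assoc (b*c) d a) +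
      (-1 : ℤ) • (assoc (b*d) a c - assoc a (b*d) c) +
      (-1 : ℤ) • (assoc a c (b*d) - assoc c a (b*d)) +
      (5 : ℤ) • (assoc (b*d) c a - assoc c (b*d) a) +
      (-5 : ℤ) • (assoc (c*a) b d - assoc b (c*a) d) +
      (1 : ℤ) • (assoc b d (c*a) - assoc d b (c*a)) +
      (1 : ℤ) • (assoc (c*a) d b - assoc d (c*a) b) +
      (5 : ℤ) • (assoc (c*b) a d - assoc a (c*b) d) +
      (-1 : ℤ) • (assoc a d (c*b) - assoc d a (c*b)) +
      (-1 : ℤ) • (assoc (c*b) d a - assoc d (c*b) a) +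
      (5 : ℤ) • (assoc (c*d) a b - assoc a (c*d) b) +
      (-3 : ℤ) • (assoc a b (c*d) - assoc b a (c*d)) +
      (-5 : ℤ) • (assoc (c*d) b a - assoc b (c*d) a) +
      (-2 : ℤ) • (assoc (d*a) b c - assoc b (d*a) c) +
      (-5 : ℤ) • (assoc b c (d*a) - assoc c b (d*a)) +
      (4 : ℤ) • (assoc (d*a) c b - assoc c (d*a) b) +
      (2 : ℤ) • (assoc (d*b) a c - assoc a (d*b) c) +
      (5 : ℤ) • (assoc a c (d*b) - assoc c a (d*b)) +
      (-4 : ℤ) • (assoc (d*b) c a - assoc c (d*b) a) +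
      (-4 : ℤ) • (assoc (d*c) a b - assoc a (d*c) b) +
      (4 : ℤ) • (assoc (d*c) b a - assoc b (d*c) a) +
      (1 : ℤ) • (a * assoc b d c - a * assoc d b c) +
      (-1 : ℤ) • (assoc b d c * a - assoc d b c * a) +
      (-5 : ℤ) • (a * assoc c d b - a * assoc d c b) +
      (1 : ℤ) • (assoc d c b * a - assoc c d b * a) +
      (-1 : ℤ) • (b * assoc a d c - b * assoc d a c) +
      (1 : ℤ) • (assoc a d c * b - assoc d a c * b) +
      (5 : ℤ) • (b * assoc c d a - b * assoc d c a) +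
      (1 : ℤ) • (assoc c d a * b - assoc d c a * b) +
      (3 : ℤ) • (c * assoc a b d - c * assoc b a d) +
      (3 : ℤ) • (c * assoc a d b - c * assoc d a b) +
      (-3 : ℤ) • (c * assoc b d a - c * assoc d b a) +
      (3 : ℤ) • (assoc a b c * d - assoc b a c * d) +
      (-3 : ℤ) • (assoc c (a*b) d - assoc c d (a*b)) +
      (-3 : ℤ) • (assoc (a*c) b d - assoc (a*c) d b) +
      (2 : ℤ) • (assoc b (a*c) d - assoc b d (a*c)) +
      (2 : ℤ) • (assoc b (a*d) c - assoc b c (a*d)) +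
      (3 : ℤ) • (assoc c (b*a) d - assoc c d (b*a)) +
      (3 : ℤ) • (assoc (b*c) a d - assoc (b*c) d a) +
      (-2 : ℤ) • (assoc a (b*c) d - assoc a d (b*c)) +
      (-2 : ℤ) • (assoc a (b*d) c - assoc a c (b*d)) +
      (6 : ℤ) • (assoc (c*a) b d - assoc (c*a) d b) +
      (-4 : ℤ) • (assoc b (c*a) d - assoc b d (c*a)) +
      (-6 : ℤ) • (assoc (c*b) a d - assoc (c*b) d a) +
      (4 : ℤ) • (assoc a (c*b) d - assoc a d (c*b)) +
      (-2 : ℤ) • (assoc (c*d) a b - assoc (c*d) b a) +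
      (3 : ℤ) • (assoc (d*a) b c - assoc (d*a) c b) +
      (-1 : ℤ) • (assoc b (d*a) c - assoc b c (d*a)) +
      (-3 : ℤ) • (assoc (d*b) a c - assoc (d*b) c a) +
      (1 : ℤ) • (assoc a (d*b) c - assoc a c (d*b)) +
      (4 : ℤ) • (assoc (d*c) a b - assoc (d*c) b a) +
      (2 : ℤ) • (a * assoc b c d - a * assoc b d c) +
      (4 : ℤ) • (assoc b c d * a - assoc b d c * a) +
      (-1 : ℤ) • (a * assoc c b d - a * assoc c d b) +
      (-5 : ℤ) • (assoc c b d * a - assoc c d b * a) +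
      (-2 : ℤ) • (b * assoc a c d - b * assoc a d c) +
      (-4 : ℤ) • (assoc a c d * b - assoc a d c * b) +
      (1 : ℤ) • (b * assoc c a d - b * assoc c d a) +
      (5 : ℤ) • (assoc c a d * b - assoc c d a * b) +
      (-3 : ℤ) • (c * assoc a b d - c * assoc a d b) +
      (3 : ℤ) • (c * assoc b a d - c * assoc b d a) := by
    simp only [wjor, jassoc, jmul, assoc, mul_add, add_mul, mul_sub, sub_mul]
    abel
  have e0 : wjor a b c d - wjor b a c d = 0 := by
    rw [e, z0, z1, z2, z3, z4, z5, z6, z7, z8, z9, z10, z11, z12, z13, z14, z15, z16, z17, z18, z19, z20, z21, z22, z23, z24, z25, z26, z27, z28, z29, z30, z31, z32, z33, z34, z35, z36, z37, z38, z39, z40, z41, z42, z43, z44, z45, z46, z47, z48, z49, z50, z51, z52, z53, z54, z55, z56, z57, z58, z59, z60, z61, z62, z63, z64, z65, z66, z67, z68, z69, z70]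
    simp
  exact sub_eq_zero.mp e0


lemma sw12 (x y z w : A) : wjor x z y w = wjor x y z w :=
  (wjor_swap23 x z w y).trans (wjor_rot x y z w)

lemma sw13 (x y z w : A) : wjor x w z y = wjor x y z w :=
  ((wjor_swap23 x w z y).symm.trans (wjor_rot x z w y)).trans (wjor_rot x y z w)

lemma wjor_full (hl : ∀ a b c : A, assoc a b c = assoc b a c)
    (hr : ∀ a b c : A, assoc a b c = assoc a c b)
    (x : Fin 4 → A) (i j : Fin 4) :
    wjor (x (Equiv.swap i j 0)) (x (Equiv.swap i j 1)) (x (Equiv.swap i j 2)) (x (Equiv.swap i j 3))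
      = wjor (x 0) (x 1) (x 2) (x 3) := by
  set a := x 0 with ha; set b := x 1 with hb; set c := x 2 with hc; set d := x 3 with hd
  have s01 : wjor b a c d = wjor a b c d := (swap01 hl hr a b c d).symm
  have s12 : wjor a c b d = wjor a b c d := sw12 a b c d
  have s13 : wjor a d c b = wjor a b c d := sw13 a b c d
  have s23 : wjor a b d c = wjor a b c d := wjor_swap23 a b c d
  have s02 : wjor c b a d = wjor a b c d :=
    ((swap01 hl hr b c a d).symm.trans (sw12 b a c d)).trans s01
  have s03 : wjor d b c a = wjor a b c d :=
    ((swap01 hl hr b d c a).symm.trans (sw13 b a c d)).trans s01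
  fin_cases i <;> fin_cases j <;>
    simp only [show (0:Fin 4) = (0:Fin 4) from rfl] <;>
    norm_num [Equiv.swap_apply_def, Fin.ext_iff, ← ha, ← hb, ← hc, ← hd] <;>
    first | rfl | exact s01 | exact s02 | exact s03 | exact s12 | exact s13 | exact s23

theorem stmt11 (h2 : (2 : K) ≠ 0) (h3 : (3 : K) ≠ 0)
    (hl : ∀ a b c : A, assoc a b c = assoc b a c)
    (hr : ∀ a b c : A, assoc a b c = assoc a c b)
    (x : Fin 4 → A) (σ : Equiv.Perm (Fin 4)) :
    wjor (x (σ 0)) (x (σ 1)) (x (σ 2)) (x (σ 3)) = wjor (x 0) (x 1) (x 2) (x 3) := by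
  refine Equiv.Perm.swap_induction_on' σ rfl ?_
  intro τ i j hij ih
  have h := wjor_full hl hr (fun k => x (τ k)) i j
  simp only [Equiv.Perm.mul_apply] at h ⊢
  exact h.trans ih
end

section
/- Let A be a commutative algebra over a field of characteristic ≠ 2. Then the following are equivalent: (i) [L_a, L_b] is a derivation of A for all a, b; (ii) (a, c², b) = 2c(a,c,b) for all a, b, c; (iii) (a, bc, d) = b(a,c,d) + c(a,b,d) for all a, b, c, d; (iv) [[L_a, L_c], L_b] = L_{(a,b,c)} for all a, b, c. -/
variable {K A : Type*} [Field K] [NonUnitalNonAssocRing A] [Module K A]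
  [IsScalarTower K A A] [SMulCommClass K A A]

private lemma half_cancel (h2 : (2 : K) ≠ 0) {x y : A} (h : x + x = y + y) : x = y := by
  have h' : (2 : K) • x = (2 : K) • y := by rw [two_smul, two_smul]; exact h
  have := congrArg (fun z => (2 : K)⁻¹ • z) h'
  simpa [smul_smul, inv_mul_cancel₀ h2] using this

theorem stmt16 (h2 : (2 : K) ≠ 0) (hcomm : ∀ a b : A, a * b = b * a) :
    List.TFAE [
      ∀ a b c d : A,
        a * (b * (c * d)) - b * (a * (c * d))
          = (a * (b * c) - b * (a * c)) * d + c * (a * (b * d) - b * (a * d)),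
      ∀ a b c : A, assoc a (c * c) b = 2 • (c * assoc a c b),
      ∀ a b c d : A, assoc a (b * c) d = b * assoc a c d + c * assoc a b d,
      ∀ a b c d : A,
        a * (c * (b * d)) - c * (a * (b * d)) - b * (a * (c * d)) + b * (c * (a * d))
          = assoc a b c * d] := by
  tfae_have 1 → 3 := by
    intro h a b c d
    have H := h a d b c
    simp only [assoc, mul_sub, sub_mul, mul_add, add_mul] at H ⊢
    simp only [hcomm] at H ⊢
    abel_nf at H ⊢
    exact H
  tfae_have 3 → 1 := by
    intro h a b c d
    have H := h a c d b
    simp only [assoc, mul_sub, sub_mul, mul_add, add_mul] at H ⊢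
    simp only [hcomm] at H ⊢
    abel_nf at H ⊢
    exact H
  tfae_have 3 → 2 := by
    intro h a b c
    have H := h a c c b
    rw [two_nsmul]
    rw [H]
  tfae_have 2 → 3 := by
    intro h a b c d
    have H1 := h a d (b + c)
    have H2 := h a d b
    have H3 := h a d c
    apply half_cancel h2
    simp only [assoc, two_nsmul, mul_sub, sub_mul, mul_add, add_mul] at H1 H2 H3 ⊢
    simp only [hcomm] at H1 H2 H3 ⊢
    abel_nf at H1 H2 H3 ⊢
    linear_combination (norm := abel) H1 - H2 - H3
  tfae_have 3 → 4 := by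
    intro h a b c d
    have H := h a b d c
    simp only [assoc, mul_sub, sub_mul, mul_add, add_mul] at H ⊢
    simp only [hcomm] at H ⊢
    abel_nf at H ⊢
    linear_combination (norm := abel) H
  tfae_have 4 → 3 := by
    intro h a b c d
    have H := h a b d c
    simp only [assoc, mul_sub, sub_mul, mul_add, add_mul] at H ⊢
    simp only [hcomm] at H ⊢
    abel_nf at H ⊢
    linear_combination (norm := abel) H
  tfae_finish
end

section
/- Let A be a commutative algebra over a field of characteristic ≠ 2 satisfying the Lie triple identity (a, c², b) = 2c(a,c,b) for all a, b, c. Then A satisfies 2((ba)a)a + b((aa)a) = 3(b(aa))a for all a, b. -/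
variable {K A : Type*} [Field K] [NonUnitalNonAssocRing A] [Module K A]
  [IsScalarTower K A A] [SMulCommClass K A A]

theorem stmt17 (h2 : (2 : K) ≠ 0) (hcomm : ∀ a b : A, a * b = b * a)
    (hlt : ∀ a b c : A, assoc a (c * c) b = 2 • (c * assoc a c b)) :
    ∀ a b : A, 2 • (((b * a) * a) * a) + b * ((a * a) * a) = 3 • ((b * (a * a)) * a) := by
  intro a b
  have h := hlt b a a
  simp only [assoc, mul_sub, smul_sub] at h
  rw [hcomm a (b * (a * a)), hcomm a (b * a * a)] at h
  linear_combination (norm := abel) h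
end

section
/- Let A be an assosymmetric algebra over a field of characteristic ≠ 2, 3. Then in the Jordan algebra A^(+) (product a⋆b = ab + ba), for all a, b, c, d: ⟨a, b⋆c, d⟩ = b⋆⟨a,c,d⟩ + c⋆⟨a,b,d⟩, where ⟨x,y,z⟩ = x⋆(y⋆z) - (x⋆y)⋆z. -/
variable {K A : Type*} [Field K] [NonUnitalNonAssocRing A] [Module K A]
  [IsScalarTower K A A] [SMulCommClass K A A]

theorem stmt19 (h2 : (2 : K) ≠ 0) (h3 : (3 : K) ≠ 0)
    (hl : ∀ a b c : A, assoc a b c = assoc b a c)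
    (hr : ∀ a b c : A, assoc a b c = assoc a c b)
    (a b c d : A) :
    jassoc a (jmul b c) d = jmul b (jassoc a c d) + jmul c (jassoc a b d) := by
  have HL : ∀ x y z : A, assoc x y z - assoc y x z = 0 := fun x y z => by
    rw [hl]; exact sub_self _
  have HR : ∀ x y z : A, assoc x y z - assoc x z y = 0 := fun x y z => by
    rw [hr]; exact sub_self _
  rw [← sub_eq_zero]
  have key : jassoc a (jmul b c) d - (jmul b (jassoc a c d) + jmul c (jassoc a b d)) =
      0 - (assoc (a * b) c d - assoc c (a * b) d)
      - (assoc (a * b) c d - assoc c (a * b) d)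
      + (assoc (a * b) c d - assoc (a * b) d c)
      + (assoc (a * b) c d - assoc (a * b) d c)
      + (assoc (a * b) c d - assoc (a * b) d c)
      + (assoc (a * b) c d - assoc (a * b) d c)
      + (assoc (b * a) c d - assoc c (b * a) d)
      + (assoc (b * a) c d - assoc c (b * a) d)
      + (assoc (b * a) c d - assoc c (b * a) d)
      - (assoc (b * a) c d - assoc (b * a) d c)
      - (assoc (b * a) c d - assoc (b * a) d c)
      - (assoc (b * a) c d - assoc (b * a) d c)
      - (assoc (b * a) c d - assoc (b * a) d c)
      + (assoc (a * b) d c - assoc d (a * b) c)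
      + (assoc (a * b) d c - assoc d (a * b) c)
      - (assoc (b * a) d c - assoc d (b * a) c)
      - (assoc (b * a) d c - assoc d (b * a) c)
      - (assoc (c * a) b d - assoc b (c * a) d)
      - (assoc (c * a) b d - assoc b (c * a) d)
      - (assoc (c * a) b d - assoc (c * a) d b)
      + (assoc a (b * c) d - assoc (b * c) a d)
      - (assoc a (b * c) d - assoc a d (b * c))
      - (assoc a (b * c) d - assoc a d (b * c))
      - (assoc a (c * b) d - assoc (c * b) a d)
      - (assoc a (c * b) d - assoc (c * b) a d)
      + (assoc a (c * b) d - assoc a d (c * b))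
      + (assoc a (c * b) d - assoc a d (c * b))
      + (assoc a (c * b) d - assoc a d (c * b))
      + (assoc (a * d) b c - assoc b (a * d) c)
      + (assoc (a * d) b c - assoc b (a * d) c)
      + (assoc (a * d) b c - assoc b (a * d) c)
      - (assoc (a * d) b c - assoc (a * d) c b)
      - (assoc (a * d) b c - assoc (a * d) c b)
      - (assoc (d * a) b c - assoc b (d * a) c)
      + (assoc (d * a) b c - assoc (d * a) c b)
      + (assoc (d * a) b c - assoc (d * a) c b)
      + (assoc (d * a) b c - assoc (d * a) c b)
      + (assoc a (b * d) c - assoc a c (b * d))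
      + (assoc a (b * d) c - assoc a c (b * d))
      + (assoc a (d * b) c - assoc (d * b) a c)
      + (assoc a (d * b) c - assoc (d * b) a c)
      - (assoc a (d * b) c - assoc a c (d * b))
      - (assoc a (d * b) c - assoc a c (d * b))
      + (assoc a b (c * d) - assoc b a (c * d))
      + (assoc a b (c * d) - assoc a (c * d) b)
      - (assoc a b (d * c) - assoc b a (d * c))
      - (assoc a b (d * c) - assoc a (d * c) b)
      + (assoc (c * a) d b - assoc d (c * a) b)
      - (assoc (a * d) c b - assoc c (a * d) b)
      + (assoc a (c * d) b - assoc (c * d) a b)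
      - (assoc a (d * c) b - assoc (d * c) a b)
      + (assoc a c (b * d) - assoc c a (b * d))
      + (assoc a c (b * d) - assoc c a (b * d))
      - (assoc a c (d * b) - assoc c a (d * b))
      - (assoc a c (d * b) - assoc c a (d * b))
      - (assoc a d (b * c) - assoc d a (b * c))
      + (assoc a d (c * b) - assoc d a (c * b))
      + (assoc a d (c * b) - assoc d a (c * b))
      + (assoc a d (c * b) - assoc d a (c * b))
      + (assoc a d (c * b) - assoc d a (c * b))
      + (assoc (b * c) a d - assoc (b * c) d a)
      + (assoc (c * b) a d - assoc (c * b) d a)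
      + (assoc (c * b) a d - assoc (c * b) d a)
      + (assoc b (a * c) d - assoc b d (a * c))
      - (assoc b (c * a) d - assoc b d (c * a))
      - (assoc (b * d) a c - assoc (b * d) c a)
      + (assoc b (d * a) c - assoc b c (d * a))
      + (assoc b a (d * c) - assoc b (d * c) a)
      + (assoc c (a * b) d - assoc c d (a * b))
      - (assoc d (a * b) c - assoc d c (a * b))
      - (assoc c (a * d) b - assoc c b (a * d))
      - (assoc c (a * d) b - assoc c b (a * d))
      - (assoc c (a * d) b - assoc c b (a * d))
      - (assoc c (a * d) b - assoc c b (a * d))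
      + (assoc c (d * a) b - assoc c b (d * a))
      + (assoc c (d * a) b - assoc c b (d * a))
      - (assoc c a (b * d) - assoc c (b * d) a)
      + (assoc d (a * c) b - assoc d b (a * c))
      + (assoc d (a * c) b - assoc d b (a * c))
      + (assoc d a (b * c) - assoc d (b * c) a)
      + (assoc d a (c * b) - assoc d (c * b) a)
      - (d * (assoc a b c - assoc b a c))
      - (d * (assoc a b c - assoc b a c))
      + ((assoc a b c - assoc b a c) * d)
      - (d * (assoc a b c - assoc a c b))
      - ((assoc a b c - assoc a c b) * d)
      - ((assoc a b c - assoc a c b) * d)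
      - ((assoc a b c - assoc a c b) * d)
      + (c * (assoc a b d - assoc b a d))
      - ((assoc a b d - assoc b a d) * c)
      - ((assoc a b d - assoc b a d) * c)
      + (c * (assoc a b d - assoc a d b))
      + ((assoc a b d - assoc a d b) * c)
      + ((assoc a b d - assoc a d b) * c)
      + ((assoc a b d - assoc a d b) * c)
      + (d * (assoc a c b - assoc c a b))
      - ((assoc a c b - assoc c a b) * d)
      - ((assoc a c b - assoc c a b) * d)
      - ((assoc a c b - assoc c a b) * d)
      - (b * (assoc a c d - assoc c a d))
      + ((assoc a c d - assoc c a d) * b)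
      + (b * (assoc a c d - assoc a d c))
      - ((assoc a c d - assoc a d c) * b)
      - ((assoc a c d - assoc a d c) * b)
      - (c * (assoc a d b - assoc d a b))
      - (c * (assoc a d b - assoc d a b))
      + ((assoc a d b - assoc d a b) * c)
      + ((assoc a d b - assoc d a b) * c)
      - (b * (assoc a d c - assoc d a c))
      - (b * (assoc a d c - assoc d a c))
      - ((assoc a d c - assoc d a c) * b)
      - ((assoc a d c - assoc d a c) * b)
      - ((assoc a d c - assoc d a c) * b)
      + ((assoc b a c - assoc b c a) * d)
      + ((assoc b a c - assoc b c a) * d)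
      - (c * (assoc b a d - assoc b d a))
      - (c * (assoc b a d - assoc b d a))
      - (c * (assoc b a d - assoc b d a))
      - ((assoc b a d - assoc b d a) * c)
      - ((assoc b a d - assoc b d a) * c)
      - ((assoc b a d - assoc b d a) * c)
      - ((assoc b a d - assoc b d a) * c)
      - ((assoc b a d - assoc b d a) * c)
      + ((assoc b c a - assoc c b a) * d)
      + ((assoc b c a - assoc c b a) * d)
      + ((assoc b c a - assoc c b a) * d)
      - ((assoc b c d - assoc c b d) * a)
      - (a * (assoc b c d - assoc b d c))
      - (a * (assoc b c d - assoc b d c))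
      + ((assoc b c d - assoc b d c) * a)
      - (c * (assoc b d a - assoc d b a))
      - ((assoc b d a - assoc d b a) * c)
      - ((assoc b d a - assoc d b a) * c)
      - ((assoc b d a - assoc d b a) * c)
      - (b * (assoc c a d - assoc c d a))
      - ((assoc c a d - assoc c d a) * b)
      - ((assoc c a d - assoc c d a) * b) := by
    simp only [jassoc, jmul, assoc]
    noncomm_ring
  rw [key]
  simp only [HL, HR, mul_zero, zero_mul, add_zero, zero_add, sub_zero]
end
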